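/- arXiv:1703.09947 — 5 statements merged into one kernel-verified Lean document; each statement's English description precedes it below -/
import Mathlib

section
/- One-step sensitivity recursion for gradient descent on convex smooth losses: Let f_1,...,f_n and f_1',...,f_n' be two collections of differentiable functions from ℝ^d to ℝ with f_i = f_i' for all i ≠ n, where every function in both collections is convex, β-smooth, and L-Lipschitz. Let F(w) = (1/n)∑_i f_i(w) and F'(w) = (1/n)∑_i f_i'(w). Fix a step size η with 0 < η ≤ 1/β, and suppose w' = w − η∇F(w) and v' = v − η∇F'(v) for two points w, v ∈ ℝ^d. Then ‖w' − v'‖² ≤ ‖w − v‖² + (4ηL/n)‖w − v‖ + 8η²L²/n². -/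
/-!
The averaged loss `F` is again convex and `β`-smooth, so its gradient is co-coercive,
`⟪∇F u - ∇F v, u - v⟫ ≥ ‖∇F u - ∇F v‖² / β`; this makes the gradient step `u ↦ u - η ∇F u`
non-expansive for `η ≤ 2 / β`. The two steps differ only through `∇F v - ∇F' v`, which is
`1 / n` times the difference of the gradients of the single changed loss, and Lipschitz losses
have gradients of norm at most `L`. Hence `‖w' - v'‖ ≤ ‖w - v‖ + 2ηL / n`; squaring gives the
claim.
-/

open RealInnerProductSpace

lemma le_of_forall_le_add_mul {a b C : ℝ} (h : ∀ t : ℝ, 0 < t → t ≤ 1 → a ≤ b + C * t) :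
    a ≤ b := by
  have hlim : Filter.Tendsto (fun t => b + C * t) (nhdsWithin 0 (Set.Ioi 0)) (nhds b) := by
    simpa using tendsto_nhdsWithin_of_tendsto_nhds
      ((by fun_prop : Continuous fun t : ℝ => b + C * t).tendsto 0)
  refine ge_of_tendsto hlim ?_
  filter_upwards [Ioc_mem_nhdsGT (zero_lt_one' ℝ)] with t ht using h t ht.1 ht.2

lemma nonneg_of_abs_sub_le_mul_norm {E : Type*} [NormedAddCommGroup E] [Nontrivial E]
    {g : E → ℝ} {L : ℝ} (hg : ∀ u v, |g u - g v| ≤ L * ‖u - v‖) : 0 ≤ L := by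
  obtain ⟨u, v, huv⟩ := exists_pair_ne E
  exact nonneg_of_mul_nonneg_left ((abs_nonneg _).trans (hg u v))
    (norm_pos_iff.mpr (sub_ne_zero.mpr huv))

section Smooth

variable {E : Type*} [NormedAddCommGroup E] [InnerProductSpace ℝ E] [CompleteSpace E]

def IsSmoothWith (β : ℝ) (g : E → ℝ) : Prop :=
  ∀ u v, |g u - g v - ⟪gradient g v, u - v⟫| ≤ β / 2 * ‖u - v‖ ^ 2

lemma norm_gradient_le_of_abs_sub_le {g : E → ℝ} {L : ℝ} (hL : 0 ≤ L)
    (hg : ∀ u v, |g u - g v| ≤ L * ‖u - v‖) (x : E) : ‖gradient g x‖ ≤ L := by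
  rw [gradient, LinearIsometryEquiv.norm_map]
  exact norm_fderiv_le_of_lip' ℝ hL (Filter.Eventually.of_forall fun u => hg u x)

variable {β : ℝ} {g : E → ℝ}

lemma ConvexOn.add_inner_gradient_le (hc : ConvexOn ℝ Set.univ g) (hs : IsSmoothWith β g)
    (u v : E) : g v + ⟪gradient g v, u - v⟫ ≤ g u := by
  suffices ∀ t : ℝ, 0 < t → t ≤ 1 → ⟪gradient g v, u - v⟫ ≤ g u - g v + β / 2 * ‖u - v‖ ^ 2 * t by
    linarith [le_of_forall_le_add_mul this]
  intro t ht ht1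
  have hconv : g ((1 - t) • v + t • u) ≤ (1 - t) * g v + t * g u :=
    hc.2 (Set.mem_univ v) (Set.mem_univ u) (by linarith) ht.le (by ring)
  have hstep : (1 - t) • v + t • u - v = t • (u - v) := by module
  have hquad := (abs_le.mp (hs ((1 - t) • v + t • u) v)).1
  rw [hstep, real_inner_smul_right, norm_smul, mul_pow, Real.norm_eq_abs, sq_abs] at hquad
  have : t * ⟪gradient g v, u - v⟫ ≤ t * (g u - g v + β / 2 * ‖u - v‖ ^ 2 * t) := by
    linarith
  exact le_of_mul_le_mul_left this ht

lemma IsSmoothWith.add_inner_gradient_add_le (hβ : 0 < β) (hs : IsSmoothWith β g)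
    (hfo : ∀ u v, g v + ⟪gradient g v, u - v⟫ ≤ g u) (u v : E) :
    g v + ⟪gradient g v, u - v⟫ + 1 / (2 * β) * ‖gradient g u - gradient g v‖ ^ 2 ≤ g u := by
  set D := gradient g u - gradient g v
  -- `z` minimises the quadratic upper bound of `g` around `u` shifted by the linear form `∇g v`
  set z := u - β⁻¹ • D
  have hlow := hfo z v
  have hup := (abs_le.mp (hs z u)).2
  have hzu : z - u = -(β⁻¹ • D) := by module
  have hzv : z - v = (u - v) - β⁻¹ • D := by module
  rw [hzu, inner_neg_right, real_inner_smul_right, norm_neg, norm_smul, mul_pow, Real.norm_eq_abs,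
    sq_abs] at hup
  rw [hzv, inner_sub_right, real_inner_smul_right] at hlow
  have hβ' : β / 2 * β⁻¹ ^ 2 = 1 / (2 * β) := by field_simp
  rw [← mul_assoc, hβ'] at hup
  have hD : β⁻¹ * ⟪gradient g u, D⟫ - β⁻¹ * ⟪gradient g v, D⟫ = β⁻¹ * ‖D‖ ^ 2 := by
    rw [← mul_sub, ← inner_sub_left, ← real_inner_self_eq_norm_sq]
  have hcoef : β⁻¹ * ‖D‖ ^ 2 = 2 * (1 / (2 * β) * ‖D‖ ^ 2) := by field_simp
  linarith

lemma IsSmoothWith.inner_gradient_sub_ge (hβ : 0 < β) (hc : ConvexOn ℝ Set.univ g)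
    (hs : IsSmoothWith β g) (u v : E) :
    1 / β * ‖gradient g u - gradient g v‖ ^ 2 ≤ ⟪gradient g u - gradient g v, u - v⟫ := by
  have hfo := hc.add_inner_gradient_le hs
  have huv := hs.add_inner_gradient_add_le hβ hfo u v
  have hvu := hs.add_inner_gradient_add_le hβ hfo v u
  rw [norm_sub_rev] at hvu
  have hswap : ⟪gradient g u, v - u⟫ = -⟪gradient g u, u - v⟫ := by
    rw [← inner_neg_right, neg_sub]
  have hhalf : 2 * (1 / (2 * β) * ‖gradient g u - gradient g v‖ ^ 2)
      = 1 / β * ‖gradient g u - gradient g v‖ ^ 2 := by field_simp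
  rw [inner_sub_left]
  linarith

lemma IsSmoothWith.norm_sub_smul_gradient_sub_le (hβ : 0 < β) (hc : ConvexOn ℝ Set.univ g)
    (hs : IsSmoothWith β g) {η : ℝ} (hη : 0 ≤ η) (hηβ : η ≤ 2 / β) (u v : E) :
    ‖(u - η • gradient g u) - (v - η • gradient g v)‖ ≤ ‖u - v‖ := by
  set D := gradient g u - gradient g v
  have hco := hs.inner_gradient_sub_ge hβ hc u v
  have hexpand : ‖(u - η • gradient g u) - (v - η • gradient g v)‖ ^ 2
      = ‖u - v‖ ^ 2 - 2 * η * ⟪D, u - v⟫ + η ^ 2 * ‖D‖ ^ 2 := by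
    rw [show (u - η • gradient g u) - (v - η • gradient g v) = (u - v) - η • D by module,
      norm_sub_sq_real, real_inner_smul_right, norm_smul, mul_pow, Real.norm_eq_abs, sq_abs,
      real_inner_comm]
    ring
  have hdecr : η ^ 2 * ‖D‖ ^ 2 ≤ 2 * η * (1 / β * ‖D‖ ^ 2) := by
    have : η * η ≤ η * (2 / β) := mul_le_mul_of_nonneg_left hηβ hη
    calc η ^ 2 * ‖D‖ ^ 2 = η * η * ‖D‖ ^ 2 := by ring
      _ ≤ η * (2 / β) * ‖D‖ ^ 2 := by gcongr
      _ = 2 * η * (1 / β * ‖D‖ ^ 2) := by ring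
  refine pow_le_pow_iff_left₀ (norm_nonneg _) (norm_nonneg _) two_ne_zero |>.mp ?_
  rw [hexpand]
  linarith [mul_le_mul_of_nonneg_left hco (by positivity : (0 : ℝ) ≤ 2 * η)]

end Smooth

section EmpiricalRisk

variable {E : Type*} {n : ℕ}

noncomputable def empiricalRisk (f : Fin n → E → ℝ) : E → ℝ := fun w => (1 / (n : ℝ)) * ∑ i, f i w

lemma convexOn_empiricalRisk [AddCommGroup E] [Module ℝ E] {f : Fin n → E → ℝ}
    (hc : ∀ i, ConvexOn ℝ Set.univ (f i)) : ConvexOn ℝ Set.univ (empiricalRisk f) := by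
  have hsum : ConvexOn ℝ Set.univ (fun w => ∑ i, f i w) := by
    rw [← Finset.sum_fn]
    exact Finset.sum_induction _ (ConvexOn ℝ Set.univ) (fun _ _ => ConvexOn.add)
      (convexOn_const 0 convex_univ) fun i _ => hc i
  exact hsum.smul (by positivity : (0 : ℝ) ≤ 1 / n)

variable [NormedAddCommGroup E] [InnerProductSpace ℝ E] [CompleteSpace E]

lemma gradient_empiricalRisk {f : Fin n → E → ℝ} (hf : ∀ i, Differentiable ℝ (f i)) (w : E) :
    gradient (empiricalRisk f) w = (1 / (n : ℝ)) • ∑ i, gradient (f i) w := by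
  have hsum : DifferentiableAt ℝ (fun w => ∑ i, f i w) w := by fun_prop
  unfold empiricalRisk
  rw [gradient, fderiv_const_mul hsum, fderiv_fun_sum fun i _ => hf i w, map_smul, map_sum]
  rfl

lemma isSmoothWith_empiricalRisk {β : ℝ} {f : Fin n → E → ℝ} (hn : 0 < n)
    (hf : ∀ i, Differentiable ℝ (f i)) (hs : ∀ i, IsSmoothWith β (f i)) :
    IsSmoothWith β (empiricalRisk f) := by
  intro u v
  have hn' : (0 : ℝ) < n := Nat.cast_pos.mpr hn
  have hrw : empiricalRisk f u - empiricalRisk f v - ⟪gradient (empiricalRisk f) v, u - v⟫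
      = (1 / (n : ℝ)) * ∑ i, (f i u - f i v - ⟪gradient (f i) v, u - v⟫) := by
    simp only [empiricalRisk, gradient_empiricalRisk hf, real_inner_smul_left, sum_inner,
      Finset.sum_sub_distrib, mul_sub]
  rw [hrw, abs_mul, abs_of_pos (by positivity)]
  calc 1 / (n : ℝ) * |∑ i, (f i u - f i v - ⟪gradient (f i) v, u - v⟫)|
      ≤ 1 / (n : ℝ) * ∑ _i : Fin n, β / 2 * ‖u - v‖ ^ 2 := by
        gcongr
        exact (Finset.abs_sum_le_sum_abs _ _).trans (Finset.sum_le_sum fun i _ => hs i u v)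
    _ = β / 2 * ‖u - v‖ ^ 2 := by
        rw [Finset.sum_const, Finset.card_univ, Fintype.card_fin, nsmul_eq_mul]
        field_simp

lemma norm_gradient_empiricalRisk_sub_le {L : ℝ} {f f' : Fin n → E → ℝ} {j : Fin n}
    (hf : ∀ i, Differentiable ℝ (f i)) (hf' : ∀ i, Differentiable ℝ (f' i))
    (hneigh : ∀ i, i ≠ j → f i = f' i) (hg : ∀ i x, ‖gradient (f i) x‖ ≤ L)
    (hg' : ∀ i x, ‖gradient (f' i) x‖ ≤ L) (x : E) :
    ‖gradient (empiricalRisk f) x - gradient (empiricalRisk f') x‖ ≤ 2 * L / n := by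
  have hsum : ∑ i, (gradient (f i) x - gradient (f' i) x) = gradient (f j) x - gradient (f' j) x :=
    Finset.sum_eq_single_of_mem j (Finset.mem_univ j) fun i _ hi => by rw [hneigh i hi, sub_self]
  rw [gradient_empiricalRisk hf, gradient_empiricalRisk hf', ← smul_sub, ← Finset.sum_sub_distrib,
    hsum, norm_smul, Real.norm_of_nonneg (by positivity)]
  calc 1 / (n : ℝ) * ‖gradient (f j) x - gradient (f' j) x‖ ≤ 1 / (n : ℝ) * (L + L) := by
        gcongr
        exact (norm_sub_le _ _).trans (add_le_add (hg j x) (hg' j x))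
    _ = 2 * L / n := by ring

end EmpiricalRisk

theorem one_step_sensitivity_convex_general
    (d n : ℕ) (hn : 0 < n) (β L η : ℝ)
    (f f' : Fin n → EuclideanSpace ℝ (Fin d) → ℝ)
    (hdiff : ∀ i, Differentiable ℝ (f i)) (hdiff' : ∀ i, Differentiable ℝ (f' i))
    (hneigh : ∀ i : Fin n, (i : ℕ) ≠ n - 1 → f i = f' i)
    (hconv : ∀ i, ConvexOn ℝ Set.univ (f i))
    (hsmooth : ∀ i u v, |f i u - f i v - ⟪gradient (f i) v, u - v⟫| ≤ β / 2 * ‖u - v‖ ^ 2)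
    (hlip : ∀ i u v, |f i u - f i v| ≤ L * ‖u - v‖)
    (hlip' : ∀ i u v, |f' i u - f' i v| ≤ L * ‖u - v‖)
    (hη : 0 < η) (hηβ : η ≤ 1 / β)
    (F F' : EuclideanSpace ℝ (Fin d) → ℝ)
    (hF : F = fun w => (1 / (n : ℝ)) * ∑ i, f i w)
    (hF' : F' = fun w => (1 / (n : ℝ)) * ∑ i, f' i w)
    (w v w' v' : EuclideanSpace ℝ (Fin d))
    (hw' : w' = w - η • gradient F w) (hv' : v' = v - η • gradient F' v) :
    ‖w' - v'‖ ^ 2 ≤ ‖w - v‖ ^ 2 + 4 * η * L / n * ‖w - v‖ + 8 * η ^ 2 * L ^ 2 / n ^ 2 := by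
  rcases subsingleton_or_nontrivial (EuclideanSpace ℝ (Fin d)) with hE | hE
  · simp only [Subsingleton.elim w' v', Subsingleton.elim w v, sub_self, norm_zero]
    norm_num
    positivity
  have hβ : 0 < β := one_div_pos.mp (hη.trans_le hηβ)
  have hL : 0 ≤ L := nonneg_of_abs_sub_le_mul_norm (hlip ⟨0, hn⟩)
  obtain rfl : F = empiricalRisk f := hF
  obtain rfl : F' = empiricalRisk f' := hF'
  subst hw' hv'
  set G := gradient (empiricalRisk f)
  set G' := gradient (empiricalRisk f')
  have hstep : ‖w - η • G w - (v - η • G v)‖ ≤ ‖w - v‖ :=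
    (isSmoothWith_empiricalRisk hn hdiff hsmooth).norm_sub_smul_gradient_sub_le hβ
      (convexOn_empiricalRisk hconv) hη.le (hηβ.trans (by gcongr; norm_num)) w v
  have hpert : ‖G v - G' v‖ ≤ 2 * L / n :=
    norm_gradient_empiricalRisk_sub_le (j := ⟨n - 1, by omega⟩) hdiff hdiff'
      (fun i hi => hneigh i fun h => hi (Fin.ext h))
      (fun i => norm_gradient_le_of_abs_sub_le hL (hlip i))
      (fun i => norm_gradient_le_of_abs_sub_le hL (hlip' i)) v
  have hclose : ‖w - η • G w - (v - η • G' v)‖ ≤ ‖w - v‖ + 2 * η * L / n := by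
    rw [show w - η • G w - (v - η • G' v) = w - η • G w - (v - η • G v) - η • (G v - G' v) by
      module]
    refine (norm_sub_le _ _).trans ?_
    rw [norm_smul, Real.norm_of_nonneg hη.le]
    linarith [mul_le_mul_of_nonneg_left hpert hη.le, show η * (2 * L / n) = 2 * η * L / n by ring]
  calc _ ≤ (‖w - v‖ + 2 * η * L / n) ^ 2 := pow_le_pow_left₀ (norm_nonneg _) hclose 2
    _ ≤ _ := by
      have : 0 ≤ (η * L / n) ^ 2 := sq_nonneg _
      ring_nf at this ⊢
      linarith

/-- One-step sensitivity recursion for gradient descent on convex smooth losses. -/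
theorem one_step_sensitivity_convex
    (d n : ℕ) (hn : 0 < n) (β L η : ℝ)
    (f f' : Fin n → EuclideanSpace ℝ (Fin d) → ℝ)
    (hdiff : ∀ i, Differentiable ℝ (f i)) (hdiff' : ∀ i, Differentiable ℝ (f' i))
    (hneigh : ∀ i : Fin n, (i : ℕ) ≠ n - 1 → f i = f' i)
    (hconv : ∀ i, ConvexOn ℝ Set.univ (f i)) (hconv' : ∀ i, ConvexOn ℝ Set.univ (f' i))
    (hsmooth : ∀ i u v, |f i u - f i v - ⟪gradient (f i) v, u - v⟫| ≤ β / 2 * ‖u - v‖ ^ 2)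
    (hsmooth' : ∀ i u v, |f' i u - f' i v - ⟪gradient (f' i) v, u - v⟫| ≤ β / 2 * ‖u - v‖ ^ 2)
    (hlip : ∀ i u v, |f i u - f i v| ≤ L * ‖u - v‖)
    (hlip' : ∀ i u v, |f' i u - f' i v| ≤ L * ‖u - v‖)
    (hη : 0 < η) (hηβ : η ≤ 1 / β)
    (F F' : EuclideanSpace ℝ (Fin d) → ℝ)
    (hF : F = fun w => (1 / (n : ℝ)) * ∑ i, f i w)
    (hF' : F' = fun w => (1 / (n : ℝ)) * ∑ i, f' i w)
    (w v w' v' : EuclideanSpace ℝ (Fin d))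
    (hw' : w' = w - η • gradient F w) (hv' : v' = v - η • gradient F' v) :
    ‖w' - v'‖ ^ 2 ≤ ‖w - v‖ ^ 2 + 4 * η * L / n * ‖w - v‖ + 8 * η ^ 2 * L ^ 2 / n ^ 2 :=
  one_step_sensitivity_convex_general d n hn β L η f f' hdiff hdiff' hneigh hconv hsmooth hlip hlip'
    hη hηβ F F' hF hF' w v w' v' hw' hv'
end

section
/- Sublinear convergence of gradient descent for convex smooth objectives: Let F: ℝ^d → ℝ be differentiable, convex, and β-smooth, with minimizer ŵ. Run gradient descent w_{t+1} = w_t − (1/β)∇F(w_t). Then for all T ≥ 1, F(w_T) − F(ŵ) ≤ 2β‖w_0 − ŵ‖²/T. -/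
open RealInnerProductSpace

/-! Smoothness makes the step `w ↦ w - β⁻¹ • ∇F w` decrease `F` by at least `‖∇F w‖² / (2β)`,
and convexity bounds `F w - F z` by `⟪∇F w, w - z⟫`. Together they give
`F w_{t+1} - F z ≤ β/2 (‖w_t - z‖² - ‖w_{t+1} - z‖²)`, which telescopes; as `F w_t` is
nonincreasing, `T (F w_T - F z) ≤ β/2 ‖w_0 - z‖²`. -/

theorem ConvexOn.apply_sub_le_sub_of_hasFDerivAt {E : Type*} [NormedAddCommGroup E]
    [NormedSpace ℝ E] {s : Set E} {f : E → ℝ} {f' : E →L[ℝ] ℝ} {x y : E}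
    (hf : ConvexOn ℝ s f) (hx : x ∈ s) (hy : y ∈ s) (hf' : HasFDerivAt f f' x) :
    f' (y - x) ≤ f y - f x := by
  let ℓ : ℝ →ᵃ[ℝ] E := AffineMap.lineMap x y
  have hconv : ConvexOn ℝ (ℓ ⁻¹' s) (f ∘ ℓ) := hf.comp_affineMap ℓ
  have hderiv : HasDerivAt (f ∘ ℓ) (f' (y - x)) 0 := by
    rw [← AffineMap.lineMap_apply_zero (k := ℝ) x y] at hf'
    exact hf'.comp_hasDerivAt (0 : ℝ) AffineMap.hasDerivAt_lineMap
  have h0 : (0 : ℝ) ∈ ℓ ⁻¹' s := by simpa [ℓ] using hx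
  have h1 : (1 : ℝ) ∈ ℓ ⁻¹' s := by simpa [ℓ] using hy
  simpa [slope_def_field, ℓ] using hconv.le_slope_of_hasDerivAt h0 h1 one_pos hderiv

theorem mul_le_of_antitone_of_le_sub_succ {a b : ℕ → ℝ} (ha : Antitone a)
    (hab : ∀ t, a (t + 1) ≤ b t - b (t + 1)) (T : ℕ) (hb : 0 ≤ b T) : T * a T ≤ b 0 := by
  calc (T : ℝ) * a T = ∑ _t ∈ Finset.range T, a T := by simp
    _ ≤ ∑ t ∈ Finset.range T, a (t + 1) :=
        Finset.sum_le_sum fun t ht => ha (Finset.mem_range.mp ht)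
    _ ≤ ∑ t ∈ Finset.range T, (b t - b (t + 1)) := Finset.sum_le_sum fun t _ => hab t
    _ = b 0 - b T := Finset.sum_range_sub' b T
    _ ≤ b 0 := by linarith

section GradientDescent

variable {E : Type*} [NormedAddCommGroup E] [InnerProductSpace ℝ E] [CompleteSpace E]
  {f : E → ℝ} {β : ℝ}

theorem ConvexOn.inner_gradient_le_sub (hf : ConvexOn ℝ Set.univ f) {x : E}
    (hx : DifferentiableAt ℝ f x) (y : E) : ⟪gradient f x, y - x⟫ ≤ f y - f x := by
  simpa using hf.apply_sub_le_sub_of_hasFDerivAt (Set.mem_univ x) (Set.mem_univ y)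
    hx.hasGradientAt.hasFDerivAt

theorem apply_gradient_step_le_sub_norm_sq (hβ : 0 < β)
    (hsmooth : ∀ u v, f u ≤ f v + ⟪gradient f v, u - v⟫ + β / 2 * ‖u - v‖ ^ 2) (x : E) :
    f (x - β⁻¹ • gradient f x) ≤ f x - (2 * β)⁻¹ * ‖gradient f x‖ ^ 2 := by
  have h := hsmooth (x - β⁻¹ • gradient f x) x
  rw [sub_sub_cancel_left, inner_neg_right, real_inner_smul_right, real_inner_self_eq_norm_sq,
    norm_neg, norm_smul, mul_pow, Real.norm_eq_abs, sq_abs] at h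
  convert h using 1
  field_simp
  ring

theorem apply_gradient_step_sub_le_sub_norm_sq (hβ : 0 < β) (hf : ConvexOn ℝ Set.univ f) {x : E}
    (hx : DifferentiableAt ℝ f x)
    (hsmooth : ∀ u v, f u ≤ f v + ⟪gradient f v, u - v⟫ + β / 2 * ‖u - v‖ ^ 2) (z : E) :
    f (x - β⁻¹ • gradient f x) - f z ≤
      β / 2 * (‖x - z‖ ^ 2 - ‖x - β⁻¹ • gradient f x - z‖ ^ 2) := by
  have hdescent := apply_gradient_step_le_sub_norm_sq hβ hsmooth x
  have hsupport := hf.inner_gradient_le_sub hx z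
  have hexpand : ‖x - β⁻¹ • gradient f x - z‖ ^ 2 = ‖x - z‖ ^ 2
      - 2 * β⁻¹ * ⟪gradient f x, x - z⟫ + β⁻¹ ^ 2 * ‖gradient f x‖ ^ 2 := by
    rw [sub_right_comm, norm_sub_sq_real, real_inner_smul_right, real_inner_comm, norm_smul,
      mul_pow, Real.norm_eq_abs, sq_abs]
    ring
  have hflip : ⟪gradient f x, z - x⟫ = -⟪gradient f x, x - z⟫ := by
    rw [← inner_neg_right, neg_sub]
  rw [hexpand]
  have hscale : β / 2 * (2 * β⁻¹ * ⟪gradient f x, x - z⟫ - β⁻¹ ^ 2 * ‖gradient f x‖ ^ 2) =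
      ⟪gradient f x, x - z⟫ - (2 * β)⁻¹ * ‖gradient f x‖ ^ 2 := by
    field_simp
  linarith

theorem mul_sub_le_of_gradient_descent (hβ : 0 < β) (hf : ConvexOn ℝ Set.univ f)
    (hdiff : Differentiable ℝ f)
    (hsmooth : ∀ u v, f u ≤ f v + ⟪gradient f v, u - v⟫ + β / 2 * ‖u - v‖ ^ 2)
    {w : ℕ → E} (hw : ∀ t, w (t + 1) = w t - β⁻¹ • gradient f (w t)) (z : E) (T : ℕ) :
    T * (f (w T) - f z) ≤ β / 2 * ‖w 0 - z‖ ^ 2 := by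
  have hanti : Antitone fun t => f (w t) - f z := by
    refine antitone_nat_of_succ_le fun t => ?_
    have hdescent := apply_gradient_step_le_sub_norm_sq hβ hsmooth (w t)
    have hdecrease : 0 ≤ (2 * β)⁻¹ * ‖gradient f (w t)‖ ^ 2 :=
      mul_nonneg (inv_nonneg.mpr (by linarith)) (sq_nonneg _)
    rw [hw t]
    linarith
  refine mul_le_of_antitone_of_le_sub_succ (b := fun t => β / 2 * ‖w t - z‖ ^ 2) hanti
    (fun t => ?_) T (mul_nonneg (half_pos hβ).le (sq_nonneg _))
  rw [← mul_sub, hw t]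
  exact apply_gradient_step_sub_le_sub_norm_sq hβ hf (hdiff (w t)) hsmooth z

end GradientDescent

theorem gd_sublinear_convergence_convex_general
    (d : ℕ) (β : ℝ) (hβ : 0 < β)
    (F : EuclideanSpace ℝ (Fin d) → ℝ)
    (hdiff : Differentiable ℝ F)
    (hconv : ConvexOn ℝ Set.univ F)
    (hsmooth : ∀ u v, |F u - F v - ⟪gradient F v, u - v⟫| ≤ β / 2 * ‖u - v‖ ^ 2)
    (what : EuclideanSpace ℝ (Fin d))
    (w : ℕ → EuclideanSpace ℝ (Fin d))
    (hw : ∀ t, w (t + 1) = w t - (1 / β) • gradient F (w t)) :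
    ∀ T : ℕ, 1 ≤ T → F (w T) - F what ≤ 2 * β * ‖w 0 - what‖ ^ 2 / T := by
  intro T hT
  have hupper : ∀ u v, F u ≤ F v + ⟪gradient F v, u - v⟫ + β / 2 * ‖u - v‖ ^ 2 :=
    fun u v => by linarith [(abs_le.mp (hsmooth u v)).2]
  simp only [one_div] at hw
  have hsum := mul_sub_le_of_gradient_descent hβ hconv hdiff hupper hw what T
  have hTpos : (0 : ℝ) < T := by exact_mod_cast hT
  rw [le_div_iff₀ hTpos]
  nlinarith [sq_nonneg ‖w 0 - what‖]

/-- Sublinear convergence of gradient descent for convex smooth objectives. -/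
theorem gd_sublinear_convergence_convex
    (d : ℕ) (β : ℝ) (hβ : 0 < β)
    (F : EuclideanSpace ℝ (Fin d) → ℝ)
    (hdiff : Differentiable ℝ F)
    (hconv : ConvexOn ℝ Set.univ F)
    (hsmooth : ∀ u v, |F u - F v - ⟪gradient F v, u - v⟫| ≤ β / 2 * ‖u - v‖ ^ 2)
    (what : EuclideanSpace ℝ (Fin d)) (hmin : ∀ x, F what ≤ F x)
    (w : ℕ → EuclideanSpace ℝ (Fin d))
    (hw : ∀ t, w (t + 1) = w t - (1 / β) • gradient F (w t)) :
    ∀ T : ℕ, 1 ≤ T → F (w T) - F what ≤ 2 * β * ‖w 0 - what‖ ^ 2 / T :=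
  gd_sublinear_convergence_convex_general d β hβ F hdiff hconv hsmooth what w hw
end

section
/- ε-differential privacy of the high-dimensional exponential mechanism with respect to L2 sensitivity: Let ε > 0, Δ > 0, and let x, x' ∈ ℝ^d satisfy ‖x − x'‖₂ ≤ Δ. Let ν be the probability measure on ℝ^d with density proportional to exp(−ε‖z‖₂/Δ) with respect to Lebesgue measure, and let μ_x and μ_{x'} denote the pushforwards of ν under the translations z ↦ x + z and z ↦ x' + z, respectively. Then for every measurable set A ⊆ ℝ^d, μ_x(A) ≤ e^ε · μ_{x'}(A). -/
open Real MeasureTheory ENNReal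

/-- ε-differential privacy of the high-dimensional exponential mechanism
with respect to L2 sensitivity. -/
theorem exponential_mechanism_eps_dp
    (d : ℕ) (ε Δ : ℝ) (hε : 0 < ε) (hΔ : 0 < Δ)
    (x x' : EuclideanSpace ℝ (Fin d)) (hx : ‖x - x'‖ ≤ Δ)
    (ν : Measure (EuclideanSpace ℝ (Fin d)))
    (hν : ν = (∫⁻ z : EuclideanSpace ℝ (Fin d),
        ENNReal.ofReal (Real.exp (-(ε * ‖z‖) / Δ)))⁻¹ •
      volume.withDensity (fun z => ENNReal.ofReal (Real.exp (-(ε * ‖z‖) / Δ)))) :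
    ∀ A : Set (EuclideanSpace ℝ (Fin d)), MeasurableSet A →
      (ν.map (fun z => x + z)) A ≤ ENNReal.ofReal (Real.exp ε) * (ν.map (fun z => x' + z)) A := by
  intro A hA
  set f : EuclideanSpace ℝ (Fin d) → ℝ≥0∞ :=
    fun z => ENNReal.ofReal (Real.exp (-(ε * ‖z‖) / Δ)) with hf
  have hfm : Measurable f := by
    apply Measurable.ennreal_ofReal
    exact (Real.continuous_exp.comp (by continuity)).measurable
  set c : ℝ≥0∞ := (∫⁻ z : EuclideanSpace ℝ (Fin d), f z)⁻¹ with hc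
  have hm1 : (ν.map (fun z => x + z)) A = ν ((fun z => x + z) ⁻¹' A) :=
    Measure.map_apply (measurable_const_add x) hA
  have hm2 : (ν.map (fun z => x' + z)) A = ν ((fun z => x' + z) ⁻¹' A) :=
    Measure.map_apply (measurable_const_add x') hA
  set S1 := (fun z => x + z) ⁻¹' A with hS1
  set S2 := (fun z => x' + z) ⁻¹' A with hS2
  have hS1m : MeasurableSet S1 := (measurable_const_add x) hA
  have hS2m : MeasurableSet S2 := (measurable_const_add x') hA
  have hν1 : ν S1 = c * ∫⁻ z in S1, f z := by
    rw [hν, Measure.smul_apply, withDensity_apply _ hS1m]; rfl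
  have hν2 : ν S2 = c * ∫⁻ z in S2, f z := by
    rw [hν, Measure.smul_apply, withDensity_apply _ hS2m]; rfl
  set T : EuclideanSpace ℝ (Fin d) → EuclideanSpace ℝ (Fin d) := fun z => (x - x') + z with hT
  have hpre : S1 = T ⁻¹' S2 := by
    ext z
    have key : x' + (x - x' + z) = x + z := by abel
    simp [hS1, hS2, hT, Set.mem_preimage, key]
  have hTpres : MeasurePreserving T volume volume := measurePreserving_add_left volume (x - x')
  have hTemb : MeasurableEmbedding T := (MeasurableEquiv.addLeft (x - x')).measurableEmbedding
  have hchange : ∫⁻ z in S1, f (T z) = ∫⁻ z in S2, f z := by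
    rw [hpre]
    exact hTpres.setLIntegral_comp_preimage_emb hTemb f S2
  have hpt : ∀ z, f z ≤ ENNReal.ofReal (Real.exp ε) * f (T z) := by
    intro z
    rw [hf]
    simp only
    rw [← ENNReal.ofReal_mul (Real.exp_nonneg ε), ← Real.exp_add]
    apply ENNReal.ofReal_le_ofReal
    apply Real.exp_le_exp.mpr
    have h1 : ‖(x - x') + z‖ ≤ ‖x - x'‖ + ‖z‖ := norm_add_le _ _
    have h2 : ‖T z‖ = ‖(x - x') + z‖ := rfl
    rw [h2]
    have h3 : (-(ε * ‖z‖)) / Δ - (-(ε * ‖x - x' + z‖)) / Δ ≤ ε := by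
      rw [div_sub_div_same, div_le_iff₀ hΔ]
      nlinarith
    linarith
  calc (ν.map (fun z => x + z)) A = c * ∫⁻ z in S1, f z := by rw [hm1, hν1]
    _ ≤ c * ∫⁻ z in S1, ENNReal.ofReal (Real.exp ε) * f (T z) := by
        gcongr
        exact hpt _
    _ = c * (ENNReal.ofReal (Real.exp ε) * ∫⁻ z in S1, f (T z)) := by
        rw [lintegral_const_mul _ (show Measurable fun z => f (T z) from hfm.comp (measurable_const_add _))]
    _ = ENNReal.ofReal (Real.exp ε) * (c * ∫⁻ z in S2, f z) := by rw [hchange]; ring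
    _ = ENNReal.ofReal (Real.exp ε) * (ν.map (fun z => x' + z)) A := by rw [hm2, hν2]
end

section
/- (ε,δ)-differential privacy of the Gaussian mechanism (Lemma 1, Gaussian case): Let ε ∈ (0,1], δ ∈ (0,1), Δ > 0, and let x, x' ∈ ℝ^d satisfy ‖x − x'‖₂ ≤ Δ. Set σ = √(2 ln(1.25/δ))·Δ/ε and let ν be the probability measure on ℝ^d whose coordinates are i.i.d. Gaussian with mean 0 and variance σ². Let μ_x and μ_{x'} denote the pushforwards of ν under z ↦ x + z and z ↦ x' + z. Then for every measurable set A ⊆ ℝ^d, μ_x(A) ≤ e^ε · μ_{x'}(A) + δ. -/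
/-!
Put `v = x - x'`, `S = {z | x + z ∈ A}` and `S' = {z | x' + z ∈ A}`, so that `z ∈ S` iff
`z + v ∈ S'`. The Gaussian densities at `z` and `z + v` differ by the factor
`exp ((2⟪v, z⟫ + ‖v‖²) / (2σ²))`, which is at most `e^ε` on the half-space
`G = {z | ⟪v, z⟫ ≤ σ²ε - ‖v‖²/2}`; translating by `v` gives `ν (S ∩ G) ≤ e^ε ν S'`.
The complement of `G` is a tail event of `⟪v / ‖v‖, z⟫`, which is again Gaussian with variance
`σ²` (rotate `v / ‖v‖` onto a coordinate axis; the coordinates are i.i.d.). With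
`c = √(2 ln (1.25/δ))` and `σ = cΔ/ε` the normalised threshold is at least `t = c - 1/(2c)`, and
the bound `P(Z > t) ≤ e^{-t²/2}/2` gives at most `√e δ / 2.5 ≤ δ`; if `t < 0` then `δ > 15/16`,
and `P(Z > t) ≤ 1/2 + |t|/√(2π)` suffices.
-/

open Real MeasureTheory Set RealInnerProductSpace

noncomputable def isotropicGaussian {V : Type*} [Norm V] [MeasureSpace V] (σ : ℝ) : Measure V :=
  (∫⁻ z : V, ENNReal.ofReal (exp (-‖z‖ ^ 2 / (2 * σ ^ 2))))⁻¹ •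
    volume.withDensity fun z => ENNReal.ofReal (exp (-‖z‖ ^ 2 / (2 * σ ^ 2)))

section Basic

variable {V : Type*} [Norm V] [MeasureSpace V] [NeZero (volume : Measure V)] {σ : ℝ}

theorem isotropicGaussian_apply (hf : Integrable fun z : V => exp (-‖z‖ ^ 2 / (2 * σ ^ 2)))
    {T : Set V} (hT : MeasurableSet T) :
    (isotropicGaussian σ : Measure V) T = ENNReal.ofReal ((∫ z in T, exp (-‖z‖ ^ 2 / (2 * σ ^ 2))) /
      ∫ z : V, exp (-‖z‖ ^ 2 / (2 * σ ^ 2))) := by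
  have hnn : 0 ≤ᵐ[volume] fun z : V => exp (-‖z‖ ^ 2 / (2 * σ ^ 2)) :=
    ae_of_all _ fun _ => (exp_pos _).le
  rw [isotropicGaussian, Measure.smul_apply, withDensity_apply _ hT, smul_eq_mul,
    ← ofReal_integral_eq_lintegral_ofReal hf hnn,
    ← ofReal_integral_eq_lintegral_ofReal hf.integrableOn (ae_restrict_of_ae hnn),
    ENNReal.ofReal_div_of_pos (integral_exp_pos hf), ENNReal.div_eq_inv_mul]

theorem isProbabilityMeasure_isotropicGaussian
    (hf : Integrable fun z : V => exp (-‖z‖ ^ 2 / (2 * σ ^ 2))) :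
    IsProbabilityMeasure (isotropicGaussian σ : Measure V) :=
  ⟨by rw [isotropicGaussian_apply hf MeasurableSet.univ, setIntegral_univ,
    div_self (integral_exp_pos hf).ne', ENNReal.ofReal_one]⟩

end Basic

section Real

variable {b t : ℝ}

theorem integrable_exp_neg_norm_sq_div {σ : ℝ} (hσ : σ ≠ 0) :
    Integrable fun s : ℝ => exp (-‖s‖ ^ 2 / (2 * σ ^ 2)) := by
  refine (integrable_exp_neg_mul_sq (b := (2 * σ ^ 2)⁻¹) (by positivity)).congr
    (ae_of_all _ fun s => ?_)
  dsimp only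
  rw [norm_eq_abs, sq_abs, neg_div, div_eq_inv_mul, neg_mul]

theorem integral_Ioi_exp_neg_mul_sq_le_of_nonneg (hb : 0 < b) (ht : 0 ≤ t) :
    ∫ s in Ioi t, exp (-b * s ^ 2) ≤ exp (-b * t ^ 2) * (√(π / b) / 2) := by
  have hg := integrable_exp_neg_mul_sq hb
  have hshift : ∫ s in Ioi t, exp (-b * (s - t) ^ 2) = ∫ s in Ioi 0, exp (-b * s ^ 2) := by
    have h := (measurePreserving_sub_right volume t).setIntegral_preimage_emb
      (measurableEmbedding_subRight t) (fun s => exp (-b * s ^ 2)) (Ioi 0)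
    rwa [preimage_sub_const_Ioi, zero_add] at h
  calc ∫ s in Ioi t, exp (-b * s ^ 2)
      ≤ ∫ s in Ioi t, exp (-b * t ^ 2) * exp (-b * (s - t) ^ 2) := by
        refine setIntegral_mono_on hg.integrableOn
          ((hg.comp_sub_right t).const_mul _).integrableOn measurableSet_Ioi fun s hs => ?_
        rw [← exp_add, exp_le_exp]
        nlinarith [mul_nonneg hb.le (mul_nonneg ht (sub_nonneg.2 (le_of_lt hs)))]
    _ = exp (-b * t ^ 2) * (√(π / b) / 2) := by
        rw [integral_const_mul, hshift, integral_gaussian_Ioi]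

theorem integral_Ioi_exp_neg_mul_sq_le_of_nonpos (hb : 0 < b) (ht : t ≤ 0) :
    ∫ s in Ioi t, exp (-b * s ^ 2) ≤ -t + √(π / b) / 2 := by
  have hg := integrable_exp_neg_mul_sq hb
  have hIoc : ∫ s in Ioc t 0, exp (-b * s ^ 2) ≤ -t := by
    calc ∫ s in Ioc t 0, exp (-b * s ^ 2) ≤ ∫ _ in Ioc t 0, (1 : ℝ) :=
          setIntegral_mono_on hg.integrableOn (integrableOn_const measure_Ioc_lt_top.ne)
            measurableSet_Ioc fun s _ => exp_le_one_iff.2 (by nlinarith [sq_nonneg s])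
      _ = -t := by simp [Real.volume_real_Ioc_of_le ht]
  rw [← Ioc_union_Ioi_eq_Ioi ht, setIntegral_union (Ioc_disjoint_Ioi le_rfl) measurableSet_Ioi
    hg.integrableOn hg.integrableOn, integral_gaussian_Ioi]
  linarith

end Real

theorem one_fifth_le_log_div {δ : ℝ} (hδ : δ ∈ Ioo 0 1) : 1 / 5 ≤ log (1.25 / δ) := by
  have h : 1.25 ≤ 1.25 / δ := by rw [le_div_iff₀ hδ.1]; nlinarith [hδ.2]
  have := one_sub_inv_le_log_of_pos (by norm_num : (0 : ℝ) < 1.25)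
  have := log_le_log (by norm_num) h
  norm_num at *
  linarith

noncomputable def gaussianMechanismFactor (δ : ℝ) : ℝ := √(2 * log (1.25 / δ))

namespace gaussianMechanismFactor

variable {δ : ℝ}

theorem sq_eq (hδ : δ ∈ Ioo 0 1) : gaussianMechanismFactor δ ^ 2 = 2 * log (1.25 / δ) :=
  sq_sqrt (by linarith [one_fifth_le_log_div hδ])

theorem pos (hδ : δ ∈ Ioo 0 1) : 0 < gaussianMechanismFactor δ :=
  sqrt_pos.2 (by linarith [one_fifth_le_log_div hδ])

theorem exp_neg_sq_sub_le (hδ : δ ∈ Ioo 0 1) :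
    exp (-(gaussianMechanismFactor δ - 1 / (2 * gaussianMechanismFactor δ)) ^ 2 / 2) ≤ 2 * δ := by
  have hc := pos hδ
  have hc2 := sq_eq hδ
  set c := gaussianMechanismFactor δ
  have hexp : exp (-log (1.25 / δ)) = δ / 1.25 := by
    rw [exp_neg, exp_log (div_pos (by norm_num) hδ.1), inv_div]
  have hsqrt_e : exp (1 / 2) ≤ 2.5 := by
    have h : exp (1 / 2) ^ 2 = exp 1 := by rw [← exp_nat_mul]; norm_num
    nlinarith [exp_pos (1 / 2), exp_one_lt_d9]
  calc exp (-(c - 1 / (2 * c)) ^ 2 / 2) ≤ exp (1 / 2) * exp (-log (1.25 / δ)) := by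
        rw [← exp_add, exp_le_exp]
        have : (c - 1 / (2 * c)) ^ 2 = c ^ 2 - 1 + 1 / (4 * c ^ 2) := by field_simp; ring
        have : 0 ≤ 1 / (4 * c ^ 2) := by positivity
        nlinarith
    _ ≤ 2.5 * (δ / 1.25) := by
        rw [hexp]
        gcongr
        exact div_nonneg hδ.1.le (by norm_num)
    _ = 2 * δ := by ring

theorem fifteen_sixteenths_lt_of_lt_inv (hδ : δ ∈ Ioo 0 1)
    (h : gaussianMechanismFactor δ < 1 / (2 * gaussianMechanismFactor δ)) : 15 / 16 < δ := by
  have hc := pos hδ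
  have hc2 := sq_eq hδ
  have hL : log (1.25 / δ) < 1 / 4 := by
    rw [lt_div_iff₀ (by positivity)] at h
    nlinarith
  have := add_one_le_exp (-log (1.25 / δ))
  rw [exp_neg, exp_log (div_pos (by norm_num) hδ.1), inv_div] at this
  norm_num at this
  linarith

theorem inv_two_mul_sub_le_one (hδ : δ ∈ Ioo 0 1) :
    1 / (2 * gaussianMechanismFactor δ) - gaussianMechanismFactor δ ≤ 1 := by
  have hc := pos hδ
  have hc2 := sq_eq hδ
  have := one_fifth_le_log_div hδ
  rw [sub_le_iff_le_add, div_le_iff₀ (by positivity)]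
  nlinarith

end gaussianMechanismFactor

theorem integral_Ioi_exp_neg_mul_sq_le_mul_integral {σ δ a : ℝ} (hσ : 0 < σ) (hδ : δ ∈ Ioo 0 1)
    (ha : σ * (gaussianMechanismFactor δ - 1 / (2 * gaussianMechanismFactor δ)) ≤ a) :
    ∫ s in Ioi a, exp (-(2 * σ ^ 2)⁻¹ * s ^ 2) ≤ δ * ∫ s, exp (-(2 * σ ^ 2)⁻¹ * s ^ 2) := by
  set c := gaussianMechanismFactor δ
  set b := (2 * σ ^ 2)⁻¹
  have hb : 0 < b := by positivity
  have hg := integrable_exp_neg_mul_sq hb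
  have hI : 2.5 * σ ≤ √(π / b) := by
    rw [le_sqrt (by positivity) (by positivity), div_inv_eq_mul]
    nlinarith [pi_gt_d2, sq_nonneg σ]
  rw [integral_gaussian]
  refine (setIntegral_mono_set hg.integrableOn (ae_of_all _ fun _ => (exp_pos _).le)
    (Ioi_subset_Ioi ha).eventuallyLE).trans ?_
  rcases le_or_gt 0 (c - 1 / (2 * c)) with hγ | hγ
  · calc ∫ s in Ioi (σ * (c - 1 / (2 * c))), exp (-b * s ^ 2)
        ≤ exp (-b * (σ * (c - 1 / (2 * c))) ^ 2) * (√(π / b) / 2) :=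
          integral_Ioi_exp_neg_mul_sq_le_of_nonneg hb (mul_nonneg hσ.le hγ)
      _ = exp (-(c - 1 / (2 * c)) ^ 2 / 2) * (√(π / b) / 2) := by
          congr 2; simp only [b]; field_simp
      _ ≤ 2 * δ * (√(π / b) / 2) := by
          gcongr; exact gaussianMechanismFactor.exp_neg_sq_sub_le hδ
      _ = δ * √(π / b) := by ring
  · have hδ' := gaussianMechanismFactor.fifteen_sixteenths_lt_of_lt_inv hδ (sub_neg.1 hγ)
    have hγ' := gaussianMechanismFactor.inv_two_mul_sub_le_one hδ
    calc ∫ s in Ioi (σ * (c - 1 / (2 * c))), exp (-b * s ^ 2)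
        ≤ -(σ * (c - 1 / (2 * c))) + √(π / b) / 2 :=
          integral_Ioi_exp_neg_mul_sq_le_of_nonpos hb (mul_nonpos_of_nonneg_of_nonpos hσ.le hγ.le)
      _ ≤ δ * √(π / b) := by nlinarith

theorem isotropicGaussian_Ioi_le {σ δ a : ℝ} (hσ : 0 < σ) (hδ : δ ∈ Ioo 0 1)
    (ha : σ * (gaussianMechanismFactor δ - 1 / (2 * gaussianMechanismFactor δ)) ≤ a) :
    (isotropicGaussian σ : Measure ℝ) (Ioi a) ≤ ENNReal.ofReal δ := by
  have hf := integrable_exp_neg_norm_sq_div hσ.ne'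
  rw [isotropicGaussian_apply hf measurableSet_Ioi]
  refine ENNReal.ofReal_le_ofReal ((div_le_iff₀ (integral_exp_pos hf)).2 ?_)
  have h (s : ℝ) : -‖s‖ ^ 2 / (2 * σ ^ 2) = -(2 * σ ^ 2)⁻¹ * s ^ 2 := by
    rw [norm_eq_abs, sq_abs]; ring
  simpa only [h] using integral_Ioi_exp_neg_mul_sq_le_mul_integral hσ hδ ha

theorem indicator_univ_pi_prod {ι α M : Type*} [Fintype ι] [CommMonoidWithZero M]
    (s : ι → Set α) (g : ι → α → M) (y : ι → α) :
    (univ.pi s).indicator (fun y => ∏ j, g j (y j)) y = ∏ j, (s j).indicator (g j) (y j) := by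
  by_cases hy : y ∈ univ.pi s
  · rw [indicator_of_mem hy]
    exact Finset.prod_congr rfl fun j _ => (indicator_of_mem (hy j (mem_univ j)) _).symm
  · obtain ⟨j, -, hj⟩ := not_forall₂.1 hy
    rw [indicator_of_notMem hy, Finset.prod_eq_zero (Finset.mem_univ j) (indicator_of_notMem hj _)]

section Euclidean

variable {ι : Type*} [Fintype ι] {σ : ℝ}

theorem exp_neg_norm_sq_toLp_div (σ : ℝ) (y : ι → ℝ) :
    exp (-‖WithLp.toLp 2 y‖ ^ 2 / (2 * σ ^ 2)) = ∏ j, exp (-‖y j‖ ^ 2 / (2 * σ ^ 2)) := by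
  rw [EuclideanSpace.norm_sq_eq, ← exp_sum, ← Finset.sum_div, Finset.sum_neg_distrib]

theorem integrable_exp_neg_norm_sq_div_euclideanSpace (hσ : σ ≠ 0) :
    Integrable fun z : EuclideanSpace ℝ ι => exp (-‖z‖ ^ 2 / (2 * σ ^ 2)) := by
  rw [← (PiLp.volume_preserving_toLp ι).integrable_comp_emb
    (MeasurableEquiv.toLp 2 _).measurableEmbedding]
  simp only [Function.comp_def, exp_neg_norm_sq_toLp_div]
  exact Integrable.fintype_prod fun _ => integrable_exp_neg_norm_sq_div hσ

theorem isotropicGaussian_map_ofLp (hσ : σ ≠ 0) :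
    (isotropicGaussian σ : Measure (EuclideanSpace ℝ ι)).map WithLp.ofLp =
      Measure.pi fun _ => isotropicGaussian σ := by
  have hmp := PiLp.volume_preserving_toLp ι
  have hemb := (MeasurableEquiv.toLp 2 (ι → ℝ)).measurableEmbedding
  have := isProbabilityMeasure_isotropicGaussian (integrable_exp_neg_norm_sq_div hσ)
  refine (Measure.pi_eq fun s hs => ?_).symm
  have hbox : ∫ z in (WithLp.ofLp : EuclideanSpace ℝ ι → ι → ℝ) ⁻¹' univ.pi s,
      exp (-‖z‖ ^ 2 / (2 * σ ^ 2)) = ∏ j, ∫ t in s j, exp (-‖t‖ ^ 2 / (2 * σ ^ 2)) := by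
    rw [← hmp.setIntegral_preimage_emb hemb]
    simp only [preimage_preimage, preimage_id', exp_neg_norm_sq_toLp_div]
    rw [← integral_indicator (MeasurableSet.univ_pi hs),
      integral_congr_ae (ae_of_all _
        (indicator_univ_pi_prod s fun _ t => exp (-‖t‖ ^ 2 / (2 * σ ^ 2)))),
      integral_fintype_prod_volume_eq_prod]
    exact Finset.prod_congr rfl fun j _ => integral_indicator (hs j)
  have htot : ∫ z : EuclideanSpace ℝ ι, exp (-‖z‖ ^ 2 / (2 * σ ^ 2)) =
      ∏ _ : ι, ∫ t : ℝ, exp (-‖t‖ ^ 2 / (2 * σ ^ 2)) := by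
    rw [← hmp.integral_comp hemb]
    simp only [exp_neg_norm_sq_toLp_div]
    exact integral_fintype_prod_volume_eq_prod fun _ t => exp (-‖t‖ ^ 2 / (2 * σ ^ 2))
  rw [Measure.map_apply (by fun_prop) (MeasurableSet.univ_pi hs),
    isotropicGaussian_apply (integrable_exp_neg_norm_sq_div_euclideanSpace hσ)
      (MeasurableSet.univ_pi hs |>.preimage (by fun_prop)), hbox, htot, ← Finset.prod_div_distrib,
    ENNReal.ofReal_prod_of_nonneg fun j _ => div_nonneg (setIntegral_nonneg (hs j)
      fun _ _ => (exp_pos _).le) (integral_nonneg fun _ => (exp_pos _).le)]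
  exact Finset.prod_congr rfl fun j _ =>
    (isotropicGaussian_apply (integrable_exp_neg_norm_sq_div hσ) (hs j)).symm

theorem isotropicGaussian_map_eval (hσ : σ ≠ 0) (i : ι) :
    (isotropicGaussian σ : Measure (EuclideanSpace ℝ ι)).map (fun z => z i) =
      isotropicGaussian σ := by
  classical
  have := isProbabilityMeasure_isotropicGaussian (integrable_exp_neg_norm_sq_div hσ)
  rw [show (fun z : EuclideanSpace ℝ ι => z i) = Function.eval i ∘ WithLp.ofLp from rfl,
    ← Measure.map_map (measurable_pi_apply i) (by fun_prop), isotropicGaussian_map_ofLp hσ,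
    Measure.pi_map_eval]
  simp

end Euclidean

theorem withDensity_preimage_add_inter_le {G : Type*} [AddGroup G] [MeasurableSpace G]
    [MeasurableAdd G] (μ : Measure G) [μ.IsAddRightInvariant] [SFinite μ] {ρ : G → ENNReal}
    (hρ : Measurable ρ) {C : ENNReal} {v : G} {L : Set G} (hL : MeasurableSet L)
    (h : ∀ z ∈ L, ρ z ≤ C * ρ (z + v)) (S : Set G) :
    μ.withDensity ρ ((· + v) ⁻¹' S ∩ L) ≤ C * μ.withDensity ρ S := by
  calc μ.withDensity ρ ((· + v) ⁻¹' S ∩ L) = ∫⁻ z in (· + v) ⁻¹' S, L.indicator ρ z ∂μ := by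
        rw [withDensity_apply', setLIntegral_indicator hL, inter_comm]
    _ ≤ ∫⁻ z in (· + v) ⁻¹' S, C * ρ (z + v) ∂μ := by
        refine lintegral_mono fun z => ?_
        by_cases hz : z ∈ L
        · rw [indicator_of_mem hz]; exact h z hz
        · rw [indicator_of_notMem hz]; exact zero_le
    _ = ∫⁻ w in S, C * ρ w ∂μ :=
        (measurePreserving_add_right μ v).setLIntegral_comp_preimage_emb
          (MeasurableEquiv.addRight v).measurableEmbedding (fun w => C * ρ w) S
    _ = C * μ.withDensity ρ S := by rw [lintegral_const_mul C hρ, withDensity_apply']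

theorem exp_neg_norm_sq_div_le_exp_mul {V : Type*} [NormedAddCommGroup V] [InnerProductSpace ℝ V]
    {σ ε : ℝ} {v z : V} (hσ : σ ≠ 0) (hz : ⟪v, z⟫ ≤ σ ^ 2 * ε - ‖v‖ ^ 2 / 2) :
    exp (-‖z‖ ^ 2 / (2 * σ ^ 2)) ≤ exp ε * exp (-‖z + v‖ ^ 2 / (2 * σ ^ 2)) := by
  rw [← exp_add, exp_le_exp, norm_add_sq_real, real_inner_comm v z]
  have : 0 < 2 * σ ^ 2 := by positivity
  rw [add_div' _ _ _ this.ne', div_le_div_iff_of_pos_right this]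
  nlinarith

section InnerProductSpace

variable {V W : Type*} [NormedAddCommGroup V] [InnerProductSpace ℝ V] [FiniteDimensional ℝ V]
  [MeasurableSpace V] [BorelSpace V] [NormedAddCommGroup W] [InnerProductSpace ℝ W]
  [FiniteDimensional ℝ W] [MeasurableSpace W] [BorelSpace W] {σ : ℝ}

theorem isotropicGaussian_map_linearIsometryEquiv (e : V ≃ₗᵢ[ℝ] W) :
    (isotropicGaussian σ : Measure V).map e = isotropicGaussian σ := by
  have hmp := e.measurePreserving
  have hemb : MeasurableEmbedding e := e.toHomeomorph.measurableEmbedding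
  set ρ : W → ENNReal := fun w => ENNReal.ofReal (exp (-‖w‖ ^ 2 / (2 * σ ^ 2)))
  have hρ : (fun z : V => ENNReal.ofReal (exp (-‖z‖ ^ 2 / (2 * σ ^ 2)))) = fun z => ρ (e z) := by
    simp only [ρ, LinearIsometryEquiv.norm_map]
  ext T hT
  rw [Measure.map_apply e.continuous.measurable hT, isotropicGaussian, isotropicGaussian,
    Measure.smul_apply, Measure.smul_apply,
    withDensity_apply _ (hT.preimage e.continuous.measurable), withDensity_apply _ hT, hρ,
    hmp.lintegral_comp_emb hemb ρ, hmp.setLIntegral_comp_preimage_emb hemb ρ]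

theorem isotropicGaussian_map_inner {u : V} (hu : ‖u‖ = 1) (hσ : σ ≠ 0) :
    (isotropicGaussian σ : Measure V).map (fun z => ⟪u, z⟫) = isotropicGaussian σ := by
  classical
  have hortho : Orthonormal ℝ ((↑) : ({u} : Set V) → V) := by
    rw [orthonormal_subtype_iff_ite]
    rintro v rfl w rfl
    simp [hu]
  obtain ⟨s, B, hus, hB⟩ := hortho.exists_orthonormalBasis_extension
  have hinner : (fun z => ⟪u, z⟫) = (fun w : EuclideanSpace ℝ s => w ⟨u, hus rfl⟩) ∘ B.repr := by
    ext z
    simp [B.repr_apply_apply, hB]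
  rw [hinner, ← Measure.map_map (by fun_prop) B.repr.continuous.measurable,
    isotropicGaussian_map_linearIsometryEquiv, isotropicGaussian_map_eval hσ]

theorem isotropicGaussian_inner_gt_le {δ r : ℝ} {v : V} (hσ : 0 < σ) (hδ : δ ∈ Ioo 0 1)
    (hr : σ * (gaussianMechanismFactor δ - 1 / (2 * gaussianMechanismFactor δ)) * ‖v‖ ≤ r) :
    (isotropicGaussian σ : Measure V) {z | r < ⟪v, z⟫} ≤ ENNReal.ofReal δ := by
  rcases eq_or_ne v 0 with rfl | hv
  · rw [norm_zero, mul_zero] at hr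
    simp [not_lt.2 hr]
  have hn : 0 < ‖v‖ := norm_pos_iff.2 hv
  have hset : {z | r < ⟪v, z⟫} = (fun z => ⟪‖v‖⁻¹ • v, z⟫) ⁻¹' Ioi (r / ‖v‖) := by
    ext z
    simp only [mem_ofPred_eq, mem_preimage, mem_Ioi, real_inner_smul_left, div_lt_iff₀ hn]
    rw [inv_mul_eq_div, div_mul_cancel₀ _ hn.ne']
  have hu : ‖‖v‖⁻¹ • v‖ = 1 := by rw [norm_smul, norm_inv, norm_norm, inv_mul_cancel₀ hn.ne']
  rw [hset, ← Measure.map_apply (by fun_prop) measurableSet_Ioi,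
    isotropicGaussian_map_inner hu hσ.ne']
  exact isotropicGaussian_Ioi_le hσ hδ (by rwa [le_div_iff₀ hn])

theorem isotropicGaussian_preimage_add_inter_le (hσ : σ ≠ 0) (ε : ℝ) (v : V) (S : Set V) :
    (isotropicGaussian σ : Measure V) ((· + v) ⁻¹' S ∩ {z | ⟪v, z⟫ ≤ σ ^ 2 * ε - ‖v‖ ^ 2 / 2}) ≤
      ENNReal.ofReal (exp ε) * isotropicGaussian σ S := by
  rw [isotropicGaussian, Measure.smul_apply, Measure.smul_apply, smul_eq_mul, smul_eq_mul,
    mul_left_comm]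
  gcongr
  refine withDensity_preimage_add_inter_le volume (by fun_prop)
    (measurableSet_le (by fun_prop) (by fun_prop)) (fun z hz => ?_) S
  rw [← ENNReal.ofReal_mul (exp_pos _).le]
  exact ENNReal.ofReal_le_ofReal (exp_neg_norm_sq_div_le_exp_mul hσ hz)

end InnerProductSpace

theorem mul_sub_inv_two_mul_mul_le {c Δ ε σ n : ℝ} (hc : 0 < c) (hε : 0 < ε) (hε1 : ε ≤ 1)
    (hn : 0 ≤ n) (hnΔ : n ≤ Δ) (hσ : σ = c * Δ / ε) :
    σ * (c - 1 / (2 * c)) * n ≤ σ ^ 2 * ε - n ^ 2 / 2 := by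
  have hσε : σ * ε = c * Δ := by rw [hσ]; field_simp
  have hcn : c * n ≤ σ := by
    rw [hσ, le_div_iff₀ hε]
    nlinarith [mul_le_mul_of_nonneg_left hε1 (mul_nonneg hc.le hn)]
  have hσ0 : 0 ≤ σ := (mul_nonneg hc.le hn).trans hcn
  have h1 : σ * c * n ≤ σ ^ 2 * ε := by
    rw [show σ ^ 2 * ε = σ * c * Δ by rw [pow_two, mul_assoc, hσε]; ring]
    exact mul_le_mul_of_nonneg_left hnΔ (mul_nonneg hσ0 hc.le)
  have h2 : n ^ 2 / 2 ≤ σ * (1 / (2 * c)) * n := by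
    rw [show σ * (1 / (2 * c)) * n = σ * n / (2 * c) by ring, le_div_iff₀ (by positivity)]
    nlinarith
  linarith

/-- (ε,δ)-differential privacy of the Gaussian mechanism (Lemma 1, Gaussian
case).  The spherical Gaussian with coordinate variance `σ² = 2 ln(1.25/δ) Δ²/ε²` is
formalized via its density proportional to `exp (-‖z‖²/(2σ²))`. -/
theorem gaussian_mechanism_eps_delta_dp
    (d : ℕ) (ε δ Δ σ : ℝ) (hε : 0 < ε) (hε1 : ε ≤ 1) (hδ : δ ∈ Set.Ioo (0 : ℝ) 1)
    (hΔ : 0 < Δ) (hσ : σ = Real.sqrt (2 * Real.log (1.25 / δ)) * Δ / ε)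
    (x x' : EuclideanSpace ℝ (Fin d)) (hx : ‖x - x'‖ ≤ Δ)
    (ν : Measure (EuclideanSpace ℝ (Fin d)))
    (hν : ν = (∫⁻ z : EuclideanSpace ℝ (Fin d),
        ENNReal.ofReal (Real.exp (-‖z‖ ^ 2 / (2 * σ ^ 2))))⁻¹ •
      volume.withDensity (fun z => ENNReal.ofReal (Real.exp (-‖z‖ ^ 2 / (2 * σ ^ 2))))) :
    ∀ A : Set (EuclideanSpace ℝ (Fin d)), MeasurableSet A →
      (ν.map (fun z => x + z)) A ≤
        ENNReal.ofReal (Real.exp ε) * (ν.map (fun z => x' + z)) A + ENNReal.ofReal δ := by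
  intro A hA
  change ν = isotropicGaussian σ at hν
  change σ = gaussianMechanismFactor δ * Δ / ε at hσ
  have hc := gaussianMechanismFactor.pos hδ
  have hσ0 : 0 < σ := by rw [hσ]; positivity
  set v := x - x'
  set r := σ ^ 2 * ε - ‖v‖ ^ 2 / 2
  have hr := mul_sub_inv_two_mul_mul_le hc hε hε1 (norm_nonneg v) hx hσ
  rw [Measure.map_apply (measurable_const_add x) hA,
    Measure.map_apply (measurable_const_add x') hA, hν]
  set S' := (fun z => x' + z) ⁻¹' A
  have hS : (fun z => x + z) ⁻¹' A = (· + v) ⁻¹' S' := by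
    ext z
    have : x' + (z + v) = x + z := by simp only [v]; abel
    simp only [S', mem_preimage, this]
  have hGc : (· + v) ⁻¹' S' \ {z | ⟪v, z⟫ ≤ r} ⊆ {z | r < ⟪v, z⟫} :=
    fun z hz => show r < ⟪v, z⟫ from lt_of_not_ge hz.2
  rw [hS]
  calc isotropicGaussian σ ((· + v) ⁻¹' S')
      ≤ isotropicGaussian σ ((· + v) ⁻¹' S' ∩ {z | ⟪v, z⟫ ≤ r}) +
          isotropicGaussian σ {z | r < ⟪v, z⟫} :=
        (measure_le_inter_add_sdiff _ _ _).trans (add_le_add le_rfl (measure_mono hGc))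
    _ ≤ _ := add_le_add (isotropicGaussian_preimage_add_inter_le hσ0.ne' ε v S')
          (isotropicGaussian_inner_gt_le hσ0 hδ hr)
end

section
/- Privacy of output-perturbed gradient descent (Theorem 1, (ε,δ)-DP, convex case): Let ε ∈ (0,1], δ ∈ (0,1). Let f_1,...,f_n and f_1',...,f_n' be two collections of differentiable functions from ℝ^d to ℝ with f_i = f_i' for all i ≠ n, where every function in both collections is convex, β-smooth, and L-Lipschitz. Let F, F' be the respective averages, and run gradient descent with step size 0 < η ≤ 1/β for T steps from a common w_0, producing outputs w_T and w'_T. Let Δ = 3LTη/n and let ν be the spherical Gaussian measure on ℝ^d with coordinate variance 2 log(2/δ)Δ²/ε². Then for every measurable set A ⊆ ℝ^d, ν({z : w_T + z ∈ A}) ≤ e^ε · ν({z : w'_T + z ∈ A}) + δ. -/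
/-!
Gradient descent on a convex `β`-smooth objective is nonexpansive for step sizes `η ≤ 2/β`
(by co-coercivity of the gradient), and replacing one of the `n` losses moves the averaged
gradient by at most `2L/n`. Hence the two trajectories stay within `2LTη/n ≤ Δ` of each other.
For a Gaussian density `ρ` with variance `s`, the privacy loss `log (ρ y / ρ (y + x))` is at most
`ε` off the halfspace `{y | ⟪y, x⟫ > ε s - ‖x‖²/2}`, and the mass of that halfspace is bounded by
translating it back to the origin. The calibration `s = 2 log (2/δ) Δ²/ε²` makes that mass at most
`δ` as soon as `‖x‖ ≤ Δ`.
-/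

open Real MeasureTheory RealInnerProductSpace
open scoped ENNReal

theorem ConvexOn.sum {V ι : Type*} [AddCommGroup V] [Module ℝ V] {s : Set V} (hs : Convex ℝ s)
    {t : Finset ι} {f : ι → V → ℝ} (hf : ∀ i ∈ t, ConvexOn ℝ s (f i)) :
    ConvexOn ℝ s fun x => ∑ i ∈ t, f i x := by
  simp_rw [← Finset.sum_apply]
  exact Finset.sum_induction f (ConvexOn ℝ s) (fun _ _ => ConvexOn.add) (convexOn_const 0 hs) hf

variable {E : Type*} [NormedAddCommGroup E]

section Smooth
variable [InnerProductSpace ℝ E]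

theorem ConvexOn.inner_gradient_le_sub_s15 [CompleteSpace E] {f : E → ℝ}
    (hf : ConvexOn ℝ Set.univ f) {u g : E} (hg : HasGradientAt f g u) (w : E) :
    ⟪g, w - u⟫ ≤ f w - f u := by
  let φ : ℝ →ᵃ[ℝ] E := AffineMap.lineMap u w
  have hφ : HasDerivAt (f ∘ φ) ⟪g, w - u⟫ 0 := by
    simpa [φ] using hg.hasFDerivAt.comp_hasDerivAt_of_eq (0 : ℝ)
      (AffineMap.hasDerivAt_lineMap (a := u) (b := w)) (by simp)
  simpa [slope, φ] using
    (hf.comp_affineMap φ).le_slope_of_hasDerivAt (Set.mem_univ 0) (Set.mem_univ 1) one_pos hφ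

theorem norm_gradient_le_of_lip [CompleteSpace E] {f : E → ℝ} {L : ℝ} (hL : 0 ≤ L)
    (hf : ∀ u v, |f u - f v| ≤ L * ‖u - v‖) (x : E) : ‖gradient f x‖ ≤ L := by
  rw [← (InnerProductSpace.toDual ℝ E).norm_map, toDual_gradient]
  exact norm_fderiv_le_of_lip' ℝ hL (Filter.Eventually.of_forall fun u => hf u x)

def HasSmoothGradient (f : E → ℝ) (g : E → E) (β : ℝ) : Prop :=
  ∀ u v, |f u - f v - ⟪g v, u - v⟫| ≤ β / 2 * ‖u - v‖ ^ 2

namespace HasSmoothGradient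
variable {f : E → ℝ} {g : E → E} {β : ℝ}

theorem hasGradientAt [CompleteSpace E] (h : HasSmoothGradient f g β) (v : E) :
    HasGradientAt f (g v) v := by
  rw [hasGradientAt_iff_isLittleO]
  refine Asymptotics.IsBigO.trans_isLittleO ?_ (Asymptotics.isLittleO_pow_sub_sub v one_lt_two)
  refine Asymptotics.IsBigO.of_bound (β / 2) (Filter.Eventually.of_forall fun u => ?_)
  simpa [Real.norm_eq_abs, real_inner_comm] using h u v

theorem gradient_eq [CompleteSpace E] (h : HasSmoothGradient f g β) : gradient f = g :=
  _root_.gradient_eq h.hasGradientAt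

theorem sum {ι : Type*} {s : Finset ι} {f : ι → E → ℝ} {g : ι → E → E}
    (h : ∀ i ∈ s, HasSmoothGradient (f i) (g i) β) :
    HasSmoothGradient (fun x => ∑ i ∈ s, f i x) (fun x => ∑ i ∈ s, g i x)
      (s.card * β) := by
  intro u v
  have hsplit : ∑ i ∈ s, f i u - ∑ i ∈ s, f i v - ⟪∑ i ∈ s, g i v, u - v⟫
      = ∑ i ∈ s, (f i u - f i v - ⟪g i v, u - v⟫) := by
    rw [sum_inner, Finset.sum_sub_distrib, Finset.sum_sub_distrib]
  calc |∑ i ∈ s, f i u - ∑ i ∈ s, f i v - ⟪∑ i ∈ s, g i v, u - v⟫|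
      ≤ ∑ i ∈ s, |f i u - f i v - ⟪g i v, u - v⟫| := hsplit ▸ Finset.abs_sum_le_sum_abs _ _
    _ ≤ ∑ i ∈ s, β / 2 * ‖u - v‖ ^ 2 := Finset.sum_le_sum fun i hi => h i hi u v
    _ = s.card * β / 2 * ‖u - v‖ ^ 2 := by rw [Finset.sum_const, nsmul_eq_mul]; ring

theorem const_mul (h : HasSmoothGradient f g β) {c : ℝ} (hc : 0 ≤ c) :
    HasSmoothGradient (fun x => c * f x) (fun x => c • g x) (c * β) := by
  intro u v
  calc |c * f u - c * f v - ⟪c • g v, u - v⟫| = c * |f u - f v - ⟪g v, u - v⟫| := by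
        rw [real_inner_smul_left, ← mul_sub, ← mul_sub, abs_mul, abs_of_nonneg hc]
    _ ≤ c * (β / 2 * ‖u - v‖ ^ 2) := by gcongr; exact h u v
    _ = c * β / 2 * ‖u - v‖ ^ 2 := by ring

theorem average {n : ℕ} {f : Fin n → E → ℝ} {g : Fin n → E → E}
    (hn : 0 < n) (h : ∀ i, HasSmoothGradient (f i) (g i) β) :
    HasSmoothGradient (fun x => 1 / (n : ℝ) * ∑ i, f i x)
      (fun x => (1 / (n : ℝ)) • ∑ i, g i x) β := by
  have := (HasSmoothGradient.sum (s := Finset.univ) fun i _ => h i).const_mul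
    (c := 1 / (n : ℝ)) (by positivity)
  rwa [Finset.card_univ, Fintype.card_fin, ← mul_assoc, one_div_mul_cancel (by positivity),
    one_mul] at this

theorem add_inner_add_norm_sub_sq_div_le [CompleteSpace E] (hf : ConvexOn ℝ Set.univ f)
    (h : HasSmoothGradient f g β) (hβ : 0 < β) (u v : E) :
    f u + ⟪g u, v - u⟫ + ‖g v - g u‖ ^ 2 / (2 * β) ≤ f v := by
  set D := g v - g u
  -- compare `f` at `v - β⁻¹ • D` from below (tangent at `u`) and above (smoothness at `v`)
  have hlow := hf.inner_gradient_le_sub_s15 (h.hasGradientAt u) (v - β⁻¹ • D)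
  have hup := (le_abs_self _).trans (h (v - β⁻¹ • D) v)
  have hD : β⁻¹ * ⟪g v, D⟫ - β⁻¹ * ⟪g u, D⟫ = β⁻¹ * ‖D‖ ^ 2 := by
    rw [← mul_sub, ← inner_sub_left, real_inner_self_eq_norm_sq]
  rw [show v - β⁻¹ • D - u = (v - u) - β⁻¹ • D by abel, inner_sub_right,
    real_inner_smul_right] at hlow
  rw [show v - β⁻¹ • D - v = -(β⁻¹ • D) by abel, inner_neg_right, real_inner_smul_right,
    norm_neg, norm_smul, Real.norm_of_nonneg (inv_nonneg.mpr hβ.le)] at hup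
  have hβD : β / 2 * (β⁻¹ * ‖D‖) ^ 2 = β⁻¹ * ‖D‖ ^ 2 - ‖D‖ ^ 2 / (2 * β) := by
    field_simp; ring
  linarith

theorem norm_sub_sq_le_mul_inner [CompleteSpace E] (hf : ConvexOn ℝ Set.univ f)
    (h : HasSmoothGradient f g β) (hβ : 0 < β) (u v : E) :
    ‖g u - g v‖ ^ 2 ≤ β * ⟪g u - g v, u - v⟫ := by
  have huv := h.add_inner_add_norm_sub_sq_div_le hf hβ u v
  have hvu := h.add_inner_add_norm_sub_sq_div_le hf hβ v u
  rw [norm_sub_rev] at huv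
  have hinner : ⟪g u, v - u⟫ + ⟪g v, u - v⟫ = -⟪g u - g v, u - v⟫ := by
    rw [inner_sub_left, ← neg_sub u v, inner_neg_right]; ring
  have hsum : ‖g u - g v‖ ^ 2 / β ≤ ⟪g u - g v, u - v⟫ := by
    have : ‖g u - g v‖ ^ 2 / β = ‖g u - g v‖ ^ 2 / (2 * β) + ‖g u - g v‖ ^ 2 / (2 * β) := by
      field_simp; ring
    linarith
  rwa [div_le_iff₀' hβ] at hsum

end HasSmoothGradient

theorem lipschitzWith_one_sub_smul {g : E → E} {β η : ℝ} (hβ : 0 < β) (hη : 0 ≤ η)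
    (hηβ : η * β ≤ 2) (hg : ∀ u v, ‖g u - g v‖ ^ 2 ≤ β * ⟪g u - g v, u - v⟫) :
    LipschitzWith 1 fun u => u - η • g u := by
  refine LipschitzWith.of_dist_le_mul fun u v => ?_
  rw [NNReal.coe_one, one_mul, dist_eq_norm, dist_eq_norm]
  have hsplit : u - η • g u - (v - η • g v) = (u - v) - η • (g u - g v) := by
    rw [smul_sub]; abel
  have hinner : 0 ≤ ⟪g u - g v, u - v⟫ := by nlinarith [hg u v, sq_nonneg ‖g u - g v‖]
  rw [hsplit, ← pow_le_pow_iff_left₀ (norm_nonneg _) (norm_nonneg _) two_ne_zero,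
    norm_sub_sq_real, real_inner_smul_right, norm_smul, Real.norm_of_nonneg hη, mul_pow,
    real_inner_comm]
  nlinarith [hg u v, mul_le_mul_of_nonneg_left hηβ (mul_nonneg hη hinner)]

theorem dist_le_of_lipschitzWith_one {X : Type*} [PseudoMetricSpace X] {φ ψ : X → X} {c : ℝ}
    (hφ : LipschitzWith 1 φ) (hψ : ∀ x, dist (φ x) (ψ x) ≤ c) {w w' : ℕ → X}
    (h0 : w' 0 = w 0) (hw : ∀ t, w (t + 1) = φ (w t)) (hw' : ∀ t, w' (t + 1) = ψ (w' t))
    (T : ℕ) : dist (w T) (w' T) ≤ T * c := by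
  induction T with
  | zero => simp [h0]
  | succ t ih =>
    calc dist (w (t + 1)) (w' (t + 1))
        ≤ dist (φ (w t)) (φ (w' t)) + dist (φ (w' t)) (ψ (w' t)) := by
          rw [hw, hw']; exact dist_triangle _ _ _
      _ ≤ dist (w t) (w' t) + c :=
          add_le_add (by simpa using hφ.dist_le_mul (w t) (w' t)) (hψ _)
      _ ≤ (t + 1 : ℕ) * c := by push_cast; linarith

theorem norm_sub_le_of_gradientDescent [CompleteSpace E] {F F' : E → ℝ} {β η c : ℝ}
    (hF : ConvexOn ℝ Set.univ F) (hsF : HasSmoothGradient F (gradient F) β) (hβ : 0 < β)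
    (hη : 0 ≤ η) (hηβ : η * β ≤ 2) (hc : ∀ x, ‖gradient F x - gradient F' x‖ ≤ c)
    {w w' : ℕ → E} (hw0 : w' 0 = w 0) (hw : ∀ t, w (t + 1) = w t - η • gradient F (w t))
    (hw' : ∀ t, w' (t + 1) = w' t - η • gradient F' (w' t)) (T : ℕ) :
    ‖w T - w' T‖ ≤ T * (η * c) := by
  rw [← dist_eq_norm]
  refine dist_le_of_lipschitzWith_one (ψ := fun u => u - η • gradient F' u)
    (lipschitzWith_one_sub_smul hβ hη hηβ (hsF.norm_sub_sq_le_mul_inner hF hβ))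
    (fun x => ?_) hw0 hw hw' T
  rw [dist_eq_norm, sub_sub_sub_cancel_left, ← smul_sub, norm_smul, Real.norm_of_nonneg hη,
    norm_sub_rev]
  exact mul_le_mul_of_nonneg_left (hc x) hη

section Neighbors
variable [CompleteSpace E] {n : ℕ} {β L : ℝ} {f f' : Fin n → E → ℝ}

theorem gradient_average (hn : 0 < n) (h : ∀ i, HasSmoothGradient (f i) (gradient (f i)) β) :
    gradient (fun x => 1 / (n : ℝ) * ∑ i, f i x)
      = fun x => (1 / (n : ℝ)) • ∑ i, gradient (f i) x :=
  (HasSmoothGradient.average hn h).gradient_eq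

theorem norm_gradient_average_sub_le (hn : 0 < n) (hL : 0 ≤ L) (j : Fin n)
    (hneigh : ∀ i ≠ j, f i = f' i)
    (hs : ∀ i, HasSmoothGradient (f i) (gradient (f i)) β)
    (hs' : ∀ i, HasSmoothGradient (f' i) (gradient (f' i)) β)
    (hlip : ∀ i u v, |f i u - f i v| ≤ L * ‖u - v‖)
    (hlip' : ∀ i u v, |f' i u - f' i v| ≤ L * ‖u - v‖) (x : E) :
    ‖gradient (fun x => 1 / (n : ℝ) * ∑ i, f i x) x
      - gradient (fun x => 1 / (n : ℝ) * ∑ i, f' i x) x‖ ≤ 2 * L / n := by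
  have hsum : ∑ i, gradient (f i) x - ∑ i, gradient (f' i) x
      = gradient (f j) x - gradient (f' j) x := by
    rw [← Finset.sum_sub_distrib]
    exact Finset.sum_eq_single_of_mem j (Finset.mem_univ _) fun i _ hi => by
      rw [hneigh i hi, sub_self]
  have hj : ‖gradient (f j) x - gradient (f' j) x‖ ≤ L + L :=
    (norm_sub_le _ _).trans (add_le_add (norm_gradient_le_of_lip hL (hlip j) x)
      (norm_gradient_le_of_lip hL (hlip' j) x))
  rw [gradient_average hn hs, gradient_average hn hs', ← smul_sub, hsum, norm_smul,
    Real.norm_of_nonneg (by positivity)]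
  calc 1 / (n : ℝ) * ‖gradient (f j) x - gradient (f' j) x‖ ≤ 1 / n * (L + L) := by gcongr
    _ = 2 * L / n := by ring

end Neighbors

end Smooth

noncomputable def gaussianDensity {E : Type*} [Norm E] (s : ℝ) (z : E) : ℝ≥0∞ :=
  ENNReal.ofReal (exp (-‖z‖ ^ 2 / (2 * s)))

noncomputable def gaussianMeasure [MeasurableSpace E] (μ : Measure E) (s : ℝ) : Measure E :=
  (∫⁻ z, gaussianDensity s z ∂μ)⁻¹ • μ.withDensity (gaussianDensity s)

theorem measurable_gaussianDensity [MeasurableSpace E] [OpensMeasurableSpace E] (s : ℝ) :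
    Measurable (gaussianDensity (E := E) s) := by
  unfold gaussianDensity; fun_prop

section Gaussian
variable [InnerProductSpace ℝ E] {s : ℝ}

theorem gaussianDensity_le_exp_mul (hs : 0 < s) {ε : ℝ} {x y : E}
    (h : ⟪y, x⟫ + ‖x‖ ^ 2 / 2 ≤ ε * s) :
    gaussianDensity s y ≤ ENNReal.ofReal (exp ε) * gaussianDensity s (y + x) := by
  rw [gaussianDensity, gaussianDensity, ← ENNReal.ofReal_mul (exp_nonneg _), ← exp_add]
  gcongr
  have hloss : (2 * ⟪y, x⟫ + ‖x‖ ^ 2) / (2 * s) ≤ ε := by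
    rw [div_le_iff₀ (by positivity)]; linarith
  rw [norm_add_sq_real, neg_div, neg_div, add_assoc, add_div]
  linarith

theorem gaussianDensity_add_le (hs : 0 < s) {y a : E} (h : 0 ≤ ⟪y, a⟫) :
    gaussianDensity s (y + a)
      ≤ ENNReal.ofReal (exp (-‖a‖ ^ 2 / (2 * s))) * gaussianDensity s y := by
  rw [gaussianDensity, gaussianDensity, ← ENNReal.ofReal_mul (exp_nonneg _), ← exp_add]
  gcongr
  rw [norm_add_sq_real, ← add_div, div_le_div_iff_of_pos_right (by positivity)]
  linarith

theorem indicator_preimage_add_gaussianDensity_le {ε : ℝ} (hs : 0 < s) (x : E) (S : Set E)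
    (y : E) :
    {y | y + x ∈ S}.indicator (gaussianDensity s) y
      ≤ ENNReal.ofReal (exp ε) * S.indicator (gaussianDensity s) (y + x)
        + {y | ε * s - ‖x‖ ^ 2 / 2 < ⟪y, x⟫}.indicator (gaussianDensity s) y := by
  by_cases hyS : y + x ∈ S
  · by_cases hyB : ε * s - ‖x‖ ^ 2 / 2 < ⟪y, x⟫
    · simp [hyS, hyB]
    · simp only [Set.indicator, Set.mem_ofPred_eq, hyS, hyB, if_true, if_false, add_zero]
      exact gaussianDensity_le_exp_mul hs (by linarith)
  · simp [hyS]

variable [MeasurableSpace E] [BorelSpace E] (μ : Measure E) [μ.IsAddRightInvariant]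

theorem withDensity_gaussianDensity_halfspace_le (hs : 0 < s) (a : E) :
    μ.withDensity (gaussianDensity s) {y | ‖a‖ ^ 2 ≤ ⟪y, a⟫}
      ≤ ENNReal.ofReal (exp (-‖a‖ ^ 2 / (2 * s)))
        * μ.withDensity (gaussianDensity s) Set.univ := by
  set H := {y : E | ‖a‖ ^ 2 ≤ ⟪y, a⟫}
  have hH : MeasurableSet H := measurableSet_le measurable_const (by fun_prop)
  have hpt : ∀ y, H.indicator (gaussianDensity s) (y + a)
      ≤ ENNReal.ofReal (exp (-‖a‖ ^ 2 / (2 * s))) * gaussianDensity s y := by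
    intro y
    by_cases hy : y + a ∈ H
    · rw [Set.indicator_of_mem hy]
      refine gaussianDensity_add_le hs ?_
      have : ‖a‖ ^ 2 ≤ ⟪y, a⟫ + ‖a‖ ^ 2 := by
        simpa [H, inner_add_left, real_inner_self_eq_norm_sq] using hy
      linarith
    · simp [Set.indicator_of_notMem hy]
  rw [withDensity_apply _ hH, withDensity_apply _ MeasurableSet.univ, Measure.restrict_univ,
    ← lintegral_indicator hH, ← lintegral_add_right_eq_self _ a,
    ← lintegral_const_mul' _ _ ENNReal.ofReal_ne_top]
  exact lintegral_mono hpt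

theorem withDensity_gaussianDensity_preimage_add_le {ε : ℝ} (hs : 0 < s) {x : E} (hx : x ≠ 0)
    (hxε : ‖x‖ ^ 2 / 2 ≤ ε * s) {S : Set E} (hS : MeasurableSet S) :
    μ.withDensity (gaussianDensity s) {y | y + x ∈ S}
      ≤ ENNReal.ofReal (exp ε) * μ.withDensity (gaussianDensity s) S
        + ENNReal.ofReal (exp (-((ε * s - ‖x‖ ^ 2 / 2) / ‖x‖) ^ 2 / (2 * s)))
          * μ.withDensity (gaussianDensity s) Set.univ := by
  set r := ε * s - ‖x‖ ^ 2 / 2 with hr_def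
  have hr : 0 ≤ r := by linarith
  have hxpos : 0 < ‖x‖ := norm_pos_iff.mpr hx
  set B := {y : E | r < ⟪y, x⟫}
  have hB : MeasurableSet B := measurableSet_lt measurable_const (by fun_prop)
  have hS' : MeasurableSet {y | y + x ∈ S} := hS.preimage (measurable_add_const x)
  -- `a` is the point of the line `ℝ x` with `⟪a, x⟫ = r`
  set a := (r / ‖x‖ ^ 2) • x
  have hnorm_a : ‖a‖ ^ 2 = (r / ‖x‖) ^ 2 := by
    rw [norm_smul, Real.norm_of_nonneg (by positivity)]; field_simp
  have hBa : B ⊆ {y | ‖a‖ ^ 2 ≤ ⟪y, a⟫} := by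
    intro y hy
    simp only [B, Set.mem_ofPred_eq] at hy
    simp only [Set.mem_ofPred_eq, hnorm_a, a, real_inner_smul_right]
    rw [div_pow, div_mul_eq_mul_div, div_le_div_iff_of_pos_right (by positivity)]
    nlinarith
  calc μ.withDensity (gaussianDensity s) {y | y + x ∈ S}
      ≤ ∫⁻ y, (ENNReal.ofReal (exp ε) * S.indicator (gaussianDensity s) (y + x)
          + B.indicator (gaussianDensity s) y) ∂μ := by
        rw [withDensity_apply _ hS', ← lintegral_indicator hS']
        exact lintegral_mono (indicator_preimage_add_gaussianDensity_le hs x S)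
    _ = ENNReal.ofReal (exp ε) * μ.withDensity (gaussianDensity s) S
          + μ.withDensity (gaussianDensity s) B := by
        have hm : Measurable fun y => S.indicator (gaussianDensity s) (y + x) :=
          ((measurable_gaussianDensity s).indicator hS).comp (measurable_add_const x)
        rw [lintegral_add_left (hm.const_mul _),
          lintegral_const_mul' _ _ ENNReal.ofReal_ne_top,
          lintegral_add_right_eq_self (fun y => S.indicator (gaussianDensity s) y),
          lintegral_indicator hS, lintegral_indicator hB, withDensity_apply _ hS,
          withDensity_apply _ hB]
    _ ≤ _ := by
        gcongr
        rw [← hnorm_a]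
        exact (measure_mono hBa).trans (withDensity_gaussianDensity_halfspace_le μ hs a)

theorem gaussianMeasure_preimage_const_add_le {ε δ : ℝ} (hs : 0 < s) {a b : E} (hab : a ≠ b)
    (hε : ‖a - b‖ ^ 2 / 2 ≤ ε * s)
    (hδ : exp (-((ε * s - ‖a - b‖ ^ 2 / 2) / ‖a - b‖) ^ 2 / (2 * s)) ≤ δ)
    {A : Set E} (hA : MeasurableSet A) :
    gaussianMeasure μ s {z | a + z ∈ A}
      ≤ ENNReal.ofReal (exp ε) * gaussianMeasure μ s {z | b + z ∈ A} + ENNReal.ofReal δ := by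
  set γ := μ.withDensity (gaussianDensity s)
  have hI : ∫⁻ z, gaussianDensity s z ∂μ = γ Set.univ := by
    rw [withDensity_apply _ MeasurableSet.univ, Measure.restrict_univ]
  have hset : {z | a + z ∈ A} = {y | y + (a - b) ∈ {z | b + z ∈ A}} := by
    ext y
    simp only [Set.mem_ofPred_eq]
    rw [show b + (y + (a - b)) = a + y by abel]
  have key := withDensity_gaussianDensity_preimage_add_le μ hs (sub_ne_zero.mpr hab) hε
    (S := {z | b + z ∈ A}) (hA.preimage (measurable_const_add b))
  rw [← hset] at key
  simp only [gaussianMeasure, Measure.smul_apply, smul_eq_mul, hI]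
  calc (γ Set.univ)⁻¹ * γ {z | a + z ∈ A}
      ≤ (γ Set.univ)⁻¹ * (ENNReal.ofReal (exp ε) * γ {z | b + z ∈ A}
          + ENNReal.ofReal (exp (-((ε * s - ‖a - b‖ ^ 2 / 2) / ‖a - b‖) ^ 2 / (2 * s)))
            * γ Set.univ) := by gcongr
    _ = ENNReal.ofReal (exp ε) * ((γ Set.univ)⁻¹ * γ {z | b + z ∈ A})
          + ENNReal.ofReal (exp (-((ε * s - ‖a - b‖ ^ 2 / 2) / ‖a - b‖) ^ 2 / (2 * s)))
            * ((γ Set.univ)⁻¹ * γ Set.univ) := by ring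
    _ ≤ ENNReal.ofReal (exp ε) * ((γ Set.univ)⁻¹ * γ {z | b + z ∈ A}) + ENNReal.ofReal δ := by
        gcongr
        exact (mul_le_of_le_one_right' (ENNReal.inv_mul_le_one _)).trans
          (ENNReal.ofReal_le_ofReal hδ)

end Gaussian

theorem gaussian_noise_calibration {ε δ m Δ s : ℝ} (hε : 0 < ε) (hε1 : ε ≤ 1)
    (hδ : δ ∈ Set.Ioo (0 : ℝ) 1) (hm : 0 < m) (hmΔ : m ≤ Δ)
    (hs : s = 2 * log (2 / δ) * Δ ^ 2 / ε ^ 2) :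
    0 < s ∧ m ^ 2 / 2 ≤ ε * s ∧ exp (-((ε * s - m ^ 2 / 2) / m) ^ 2 / (2 * s)) ≤ δ := by
  obtain ⟨hδ0, hδ1⟩ := hδ
  set l := log (2 / δ) with hl
  have hl2 : log 2 < l := log_lt_log two_pos (by rw [lt_div_iff₀ hδ0]; linarith)
  have hlog2 : (1 : ℝ) / 2 < log 2 := by linarith [log_two_gt_d9]
  have hΔ : 0 < Δ := hm.trans_le hmΔ
  have hεs : ε * s = 2 * l * Δ ^ 2 / ε := by rw [hs]; field_simp
  have hl0 : 0 < l := by linarith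
  have hs0 : 0 < s := by rw [hs]; positivity
  -- the exponent is decreasing in `m`, so it suffices to bound it at `m = Δ`
  set t := Δ * (4 * l - ε) / (2 * ε) with ht_def
  have ht : 0 ≤ t := by
    have : 0 ≤ 4 * l - ε := by linarith
    positivity
  have hmt : t ≤ (ε * s - m ^ 2 / 2) / m := by
    have h1 : t = ε * s / Δ - Δ / 2 := by rw [ht_def, hεs]; field_simp; ring
    have h2 : ε * s / Δ ≤ ε * s / m := div_le_div_of_nonneg_left (by positivity) hm hmΔ
    rw [h1, sub_div, show m ^ 2 / 2 / m = m / 2 by field_simp]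
    linarith
  have hexp : -log δ ≤ t ^ 2 / (2 * s) := by
    have h1 : -log δ = l - log 2 := by rw [hl, log_div two_ne_zero hδ0.ne']; ring
    have h2 : t ^ 2 / (2 * s) = (4 * l - ε) ^ 2 / (16 * l) := by
      rw [ht_def, hs]; field_simp; ring
    rw [h1, h2, le_div_iff₀ (by linarith)]
    nlinarith
  refine ⟨hs0, ?_, ?_⟩
  · rw [hεs, le_div_iff₀ hε]; nlinarith
  · calc exp (-((ε * s - m ^ 2 / 2) / m) ^ 2 / (2 * s)) ≤ exp (-t ^ 2 / (2 * s)) := by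
          gcongr
      _ ≤ exp (log δ) := by rw [neg_div]; gcongr; linarith
      _ = δ := exp_log hδ0

theorem privacy_output_perturbed_gd_convex_general
    (d n T : ℕ) (hn : 0 < n) (β L η ε δ : ℝ)
    (hε : 0 < ε) (hε1 : ε ≤ 1) (hδ : δ ∈ Set.Ioo (0 : ℝ) 1)
    (f f' : Fin n → EuclideanSpace ℝ (Fin d) → ℝ)
    (hneigh : ∀ i : Fin n, (i : ℕ) ≠ n - 1 → f i = f' i)
    (hconv : ∀ i, ConvexOn ℝ Set.univ (f i))
    (hsmooth : ∀ i u v, |f i u - f i v - ⟪gradient (f i) v, u - v⟫| ≤ β / 2 * ‖u - v‖ ^ 2)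
    (hsmooth' : ∀ i u v, |f' i u - f' i v - ⟪gradient (f' i) v, u - v⟫| ≤ β / 2 * ‖u - v‖ ^ 2)
    (hlip : ∀ i u v, |f i u - f i v| ≤ L * ‖u - v‖)
    (hlip' : ∀ i u v, |f' i u - f' i v| ≤ L * ‖u - v‖)
    (hη : 0 < η) (hηβ : η ≤ 1 / β)
    (F F' : EuclideanSpace ℝ (Fin d) → ℝ)
    (hF : F = fun w => (1 / (n : ℝ)) * ∑ i, f i w)
    (hF' : F' = fun w => (1 / (n : ℝ)) * ∑ i, f' i w)
    (w w' : ℕ → EuclideanSpace ℝ (Fin d))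
    (hw0 : w' 0 = w 0)
    (hw : ∀ t, w (t + 1) = w t - η • gradient F (w t))
    (hw' : ∀ t, w' (t + 1) = w' t - η • gradient F' (w' t))
    (Δ s2 : ℝ) (hΔ : Δ = 3 * L * T * η / n)
    (hs2 : s2 = 2 * Real.log (2 / δ) * Δ ^ 2 / ε ^ 2)
    (ν : Measure (EuclideanSpace ℝ (Fin d)))
    (hν : ν = (∫⁻ z : EuclideanSpace ℝ (Fin d),
        ENNReal.ofReal (Real.exp (-‖z‖ ^ 2 / (2 * s2))))⁻¹ •
      volume.withDensity (fun z => ENNReal.ofReal (Real.exp (-‖z‖ ^ 2 / (2 * s2))))) :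
    ∀ A : Set (EuclideanSpace ℝ (Fin d)), MeasurableSet A →
      ν {z | w T + z ∈ A} ≤ ENNReal.ofReal (Real.exp ε) * ν {z | w' T + z ∈ A}
        + ENNReal.ofReal δ := by
  intro A hA
  by_cases hwT : w T = w' T
  · rw [hwT]
    exact le_add_right (le_mul_of_one_le_left' (ENNReal.one_le_ofReal.mpr (one_le_exp hε.le)))
  subst hF hF' hν
  have hβ : 0 < β := by
    by_contra! h
    linarith [one_div_nonpos.mpr h]
  have hηβ2 : η * β ≤ 2 := by linarith [(le_div_iff₀ hβ).mp hηβ]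
  have hdist : 0 < ‖w T - w' T‖ := norm_pos_iff.mpr (sub_ne_zero.mpr hwT)
  let j : Fin n := ⟨n - 1, Nat.sub_lt hn one_pos⟩
  have hL : 0 ≤ L := nonneg_of_mul_nonneg_left ((abs_nonneg _).trans (hlip j _ _)) hdist
  have hconvF : ConvexOn ℝ Set.univ fun w => 1 / (n : ℝ) * ∑ i, f i w :=
    (ConvexOn.sum convex_univ fun i _ => hconv i).smul (by positivity)
  have hsmoothF : HasSmoothGradient (fun w => 1 / (n : ℝ) * ∑ i, f i w)
      (gradient fun w => 1 / (n : ℝ) * ∑ i, f i w) β := by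
    rw [gradient_average hn hsmooth]
    exact HasSmoothGradient.average hn hsmooth
  have hsens : ‖w T - w' T‖ ≤ T * (η * (2 * L / n)) :=
    norm_sub_le_of_gradientDescent hconvF hsmoothF hβ hη.le hηβ2
      (norm_gradient_average_sub_le hn hL j (fun i hi => hneigh i fun h => hi (Fin.ext h))
        hsmooth hsmooth' hlip hlip') hw0 hw hw' T
  have hΔ' : ‖w T - w' T‖ ≤ Δ := by
    have : 0 ≤ L * T * η / n := by positivity
    rw [hΔ]
    linarith [show (T : ℝ) * (η * (2 * L / n)) = 2 * (L * T * η / n) by ring,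
      show 3 * L * T * η / n = 3 * (L * T * η / n) by ring]
  obtain ⟨hs0, hεs, htail⟩ := gaussian_noise_calibration hε hε1 hδ hdist hΔ' hs2
  exact gaussianMeasure_preimage_const_add_le volume hs0 hwT hεs htail hA

/-- Privacy of output-perturbed gradient descent
(Theorem 1, (ε,δ)-DP, convex case).  The spherical Gaussian with coordinate variance
`s2 = 2 log(2/δ) Δ²/ε²` is formalized via its density proportional to
`exp (-‖z‖²/(2 s2))`. -/
theorem privacy_output_perturbed_gd_convex
    (d n T : ℕ) (hn : 0 < n) (β L η ε δ : ℝ)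
    (hε : 0 < ε) (hε1 : ε ≤ 1) (hδ : δ ∈ Set.Ioo (0 : ℝ) 1)
    (f f' : Fin n → EuclideanSpace ℝ (Fin d) → ℝ)
    (hdiff : ∀ i, Differentiable ℝ (f i)) (hdiff' : ∀ i, Differentiable ℝ (f' i))
    (hneigh : ∀ i : Fin n, (i : ℕ) ≠ n - 1 → f i = f' i)
    (hconv : ∀ i, ConvexOn ℝ Set.univ (f i)) (hconv' : ∀ i, ConvexOn ℝ Set.univ (f' i))
    (hsmooth : ∀ i u v, |f i u - f i v - ⟪gradient (f i) v, u - v⟫| ≤ β / 2 * ‖u - v‖ ^ 2)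
    (hsmooth' : ∀ i u v, |f' i u - f' i v - ⟪gradient (f' i) v, u - v⟫| ≤ β / 2 * ‖u - v‖ ^ 2)
    (hlip : ∀ i u v, |f i u - f i v| ≤ L * ‖u - v‖)
    (hlip' : ∀ i u v, |f' i u - f' i v| ≤ L * ‖u - v‖)
    (hη : 0 < η) (hηβ : η ≤ 1 / β)
    (F F' : EuclideanSpace ℝ (Fin d) → ℝ)
    (hF : F = fun w => (1 / (n : ℝ)) * ∑ i, f i w)
    (hF' : F' = fun w => (1 / (n : ℝ)) * ∑ i, f' i w)
    (w w' : ℕ → EuclideanSpace ℝ (Fin d))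
    (hw0 : w' 0 = w 0)
    (hw : ∀ t, w (t + 1) = w t - η • gradient F (w t))
    (hw' : ∀ t, w' (t + 1) = w' t - η • gradient F' (w' t))
    (Δ s2 : ℝ) (hΔ : Δ = 3 * L * T * η / n)
    (hs2 : s2 = 2 * Real.log (2 / δ) * Δ ^ 2 / ε ^ 2)
    (ν : Measure (EuclideanSpace ℝ (Fin d)))
    (hν : ν = (∫⁻ z : EuclideanSpace ℝ (Fin d),
        ENNReal.ofReal (Real.exp (-‖z‖ ^ 2 / (2 * s2))))⁻¹ •
      volume.withDensity (fun z => ENNReal.ofReal (Real.exp (-‖z‖ ^ 2 / (2 * s2))))) :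
    ∀ A : Set (EuclideanSpace ℝ (Fin d)), MeasurableSet A →
      ν {z | w T + z ∈ A} ≤ ENNReal.ofReal (Real.exp ε) * ν {z | w' T + z ∈ A}
        + ENNReal.ofReal δ :=
  privacy_output_perturbed_gd_convex_general d n T hn β L η ε δ hε hε1 hδ f f' hneigh hconv hsmooth
    hsmooth' hlip hlip' hη hηβ F F' hF hF' w w' hw0 hw hw' Δ s2 hΔ hs2 ν hν
end
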